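/- arXiv:1910.03105 — 6 statements merged into one kernel-verified Lean document; each statement's English description precedes it below -/
import Mathlib

section
/- Let x, y lie in the closed positive Weyl chamber and let α be a positive root. Define φ_α(x,y) = max{|x-y|, d(y, H_α)}, where H_α is the hyperplane perpendicular to α. Then there exist constants 0 < c₁ ≤ c₂ (depending only on the root system) such that c₁·φ_α(x,y) ≤ |x - σ_α y| ≤ c₂·φ_α(x,y). -/
local notation "⟪" x ", " y "⟫" => @inner ℝ _ _ x y

/-! Put `r = d(y, H_α) = ⟪α, y⟫ / ‖α‖`. The reflection moves `y` by exactly `2r`, so the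
triangle inequality gives `‖x - σ_α y‖ ≤ ‖x - y‖ + 2r` and `‖x - y‖ ≤ ‖x - σ_α y‖ + 2r`.
Since `x` and `y` lie on the same side of `H_α`, pairing `x - σ_α y` with `α` gives
`‖x - σ_α y‖ ≥ r`. These three inequalities alone yield the constants `c₁ = 1/3`, `c₂ = 3`. -/

variable {E : Type*} [NormedAddCommGroup E] [InnerProductSpace ℝ E]

noncomputable def rootReflection (α y : E) : E := y - (2 * ⟪α, y⟫ / ‖α‖ ^ 2) • α

theorem infDist_setOf_inner_eq_zero (α y : E) :
    Metric.infDist y {z : E | ⟪α, z⟫ = 0} = |⟪α, y⟫| / ‖α‖ := by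
  rcases eq_or_ne α 0 with rfl | hα
  · simp [Metric.infDist_zero_of_mem]
  have hα' : 0 < ‖α‖ := norm_pos_iff.mpr hα
  apply le_antisymm
  · have hfoot : y - (⟪α, y⟫ / ‖α‖ ^ 2) • α ∈ {z : E | ⟪α, z⟫ = 0} := by
      simp only [Set.mem_ofPred_eq, inner_sub_right, real_inner_smul_right,
        real_inner_self_eq_norm_sq]
      field_simp
      ring
    calc Metric.infDist y {z : E | ⟪α, z⟫ = 0}
        ≤ dist y (y - (⟪α, y⟫ / ‖α‖ ^ 2) • α) := Metric.infDist_le_dist_of_mem hfoot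
      _ = |⟪α, y⟫| / ‖α‖ := by
          rw [dist_eq_norm, sub_sub_cancel, norm_smul, Real.norm_eq_abs, abs_div,
            abs_of_pos (by positivity : (0 : ℝ) < ‖α‖ ^ 2)]
          field_simp
  · refine (Metric.le_infDist ⟨0, by simp⟩).mpr fun z hz => ?_
    rw [div_le_iff₀ hα', dist_eq_norm, mul_comm]
    have hshift : ⟪α, y⟫ = ⟪α, y - z⟫ := by
      rw [inner_sub_right, show ⟪α, z⟫ = 0 from hz, sub_zero]
    simpa [hshift] using abs_real_inner_le_norm α (y - z)

theorem norm_sub_rootReflection_self (α y : E) :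
    ‖y - rootReflection α y‖ = 2 * (|⟪α, y⟫| / ‖α‖) := by
  rcases eq_or_ne α 0 with rfl | hα
  · simp [rootReflection]
  rw [rootReflection, sub_sub_cancel, norm_smul, Real.norm_eq_abs, abs_div, abs_mul,
    abs_two, abs_of_pos (by positivity : (0 : ℝ) < ‖α‖ ^ 2)]
  field_simp

theorem inner_sub_rootReflection (α x y : E) :
    ⟪α, x - rootReflection α y⟫ = ⟪α, x⟫ + ⟪α, y⟫ := by
  rcases eq_or_ne α 0 with rfl | hα
  · simp
  simp only [rootReflection, inner_sub_right, real_inner_smul_right, real_inner_self_eq_norm_sq]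
  field_simp
  ring

theorem div_norm_le_norm_sub_rootReflection {α x y : E} (hx : 0 ≤ ⟪α, x⟫) :
    ⟪α, y⟫ / ‖α‖ ≤ ‖x - rootReflection α y‖ := by
  rcases eq_or_ne α 0 with rfl | hα
  · simp
  rw [div_le_iff₀ (norm_pos_iff.mpr hα), mul_comm]
  have := real_inner_le_norm α (x - rootReflection α y)
  rw [inner_sub_rootReflection] at this
  linarith

theorem one_third_max_le_and_le_three_max {u v r : ℝ} (hr : 0 ≤ r) (hvu : v ≤ u + 2 * r)
    (huv : u ≤ v + 2 * r) (hrv : r ≤ v) :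
    1 / 3 * max u r ≤ v ∧ v ≤ 3 * max u r := by
  constructor
  · rcases max_cases u r with ⟨h, -⟩ | ⟨h, -⟩ <;> rw [h] <;> linarith
  · linarith [le_max_left u r, le_max_right u r]

theorem stmt_4_general {d : ℕ}
    (Φp : Finset (EuclideanSpace ℝ (Fin d))) :
    ∃ c₁ c₂ : ℝ, 0 < c₁ ∧ c₁ ≤ c₂ ∧
      ∀ α ∈ Φp, ∀ x y : EuclideanSpace ℝ (Fin d),
        (∀ a ∈ Φp, 0 ≤ ⟪a, x⟫) → (∀ a ∈ Φp, 0 ≤ ⟪a, y⟫) →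
        c₁ * max ‖x - y‖ (Metric.infDist y {z : EuclideanSpace ℝ (Fin d) | ⟪α, z⟫ = 0})
            ≤ ‖x - (y - (2 * ⟪α, y⟫ / ‖α‖ ^ 2) • α)‖ ∧
        ‖x - (y - (2 * ⟪α, y⟫ / ‖α‖ ^ 2) • α)‖
            ≤ c₂ * max ‖x - y‖
                (Metric.infDist y {z : EuclideanSpace ℝ (Fin d) | ⟪α, z⟫ = 0}) := by
  refine ⟨1 / 3, 3, by norm_num, by norm_num, fun α hα x y hx hy => ?_⟩
  have hαy := hy α hα
  have hmove := norm_sub_rootReflection_self α y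
  rw [abs_of_nonneg hαy] at hmove
  rw [infDist_setOf_inner_eq_zero, abs_of_nonneg hαy]
  refine one_third_max_le_and_le_three_max (by positivity) ?_ ?_
    (div_norm_le_norm_sub_rootReflection (hx α hα))
  · exact hmove ▸ norm_sub_le_norm_sub_add_norm_sub x y (rootReflection α y)
  · rw [← hmove, norm_sub_rev y]
    exact norm_sub_le_norm_sub_add_norm_sub x (rootReflection α y) y

/-- For `x, y` in the closed positive Weyl chamber and a positive root `α`,
with `φ_α(x,y) = max{|x-y|, d(y, H_α)}`, there are constants `0 < c₁ ≤ c₂` depending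
only on the root system with `c₁·φ_α(x,y) ≤ |x - σ_α y| ≤ c₂·φ_α(x,y)`. -/
theorem stmt_4 {d : ℕ}
    (Φp : Finset (EuclideanSpace ℝ (Fin d))) (h0 : (0 : EuclideanSpace ℝ (Fin d)) ∉ Φp) :
    ∃ c₁ c₂ : ℝ, 0 < c₁ ∧ c₁ ≤ c₂ ∧
      ∀ α ∈ Φp, ∀ x y : EuclideanSpace ℝ (Fin d),
        (∀ a ∈ Φp, 0 ≤ ⟪a, x⟫) → (∀ a ∈ Φp, 0 ≤ ⟪a, y⟫) →
        c₁ * max ‖x - y‖ (Metric.infDist y {z : EuclideanSpace ℝ (Fin d) | ⟪α, z⟫ = 0})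
            ≤ ‖x - (y - (2 * ⟪α, y⟫ / ‖α‖ ^ 2) • α)‖ ∧
        ‖x - (y - (2 * ⟪α, y⟫ / ‖α‖ ^ 2) • α)‖
            ≤ c₂ * max ‖x - y‖
                (Metric.infDist y {z : EuclideanSpace ℝ (Fin d) | ⟪α, z⟫ = 0}) :=
  stmt_4_general Φp
end

section
/- Let x, y be in the closed positive Weyl chamber and α a positive root. Then max{|x-y|, d(x, H_α)} and max{|x-y|, d(y, H_α)} are comparable: each is bounded by a constant (depending only on the root system) times the other. -/
local notation "⟪" x ", " y "⟫" => @inner ℝ _ _ x y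

lemma aux_max_le {d : ℕ} (S : Set (EuclideanSpace ℝ (Fin d)))
    (x y : EuclideanSpace ℝ (Fin d)) :
    max ‖x - y‖ (Metric.infDist x S) ≤ 2 * max ‖x - y‖ (Metric.infDist y S) := by
  have h1 : Metric.infDist x S ≤ Metric.infDist y S + dist x y :=
    Metric.infDist_le_infDist_add_dist
  have hd : dist x y = ‖x - y‖ := dist_eq_norm x y
  have hn : (0:ℝ) ≤ ‖x - y‖ := norm_nonneg _
  have h2 : ‖x - y‖ ≤ max ‖x - y‖ (Metric.infDist y S) := le_max_left _ _
  have h3 : Metric.infDist y S ≤ max ‖x - y‖ (Metric.infDist y S) := le_max_right _ _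
  rw [max_le_iff]
  constructor
  · nlinarith
  · nlinarith

/-- For `x, y` in the closed positive Weyl chamber and a positive root `α`,
the quantities `max{|x-y|, d(x, H_α)}` and `max{|x-y|, d(y, H_α)}` are comparable, with
constant depending only on the root system. -/
theorem stmt_5 {d : ℕ}
    (Φp : Finset (EuclideanSpace ℝ (Fin d))) (h0 : (0 : EuclideanSpace ℝ (Fin d)) ∉ Φp) :
    ∃ c : ℝ, 0 < c ∧
      ∀ α ∈ Φp, ∀ x y : EuclideanSpace ℝ (Fin d),
        (∀ a ∈ Φp, 0 ≤ ⟪a, x⟫) → (∀ a ∈ Φp, 0 ≤ ⟪a, y⟫) →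
        max ‖x - y‖ (Metric.infDist x {z : EuclideanSpace ℝ (Fin d) | ⟪α, z⟫ = 0})
            ≤ c * max ‖x - y‖ (Metric.infDist y {z : EuclideanSpace ℝ (Fin d) | ⟪α, z⟫ = 0}) ∧
        max ‖x - y‖ (Metric.infDist y {z : EuclideanSpace ℝ (Fin d) | ⟪α, z⟫ = 0})
            ≤ c * max ‖x - y‖ (Metric.infDist x {z : EuclideanSpace ℝ (Fin d) | ⟪α, z⟫ = 0}) := by
  refine ⟨2, by norm_num, fun α hα x y hx hy => ?_⟩
  constructor
  · exact aux_max_le _ x y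
  · have := aux_max_le {z : EuclideanSpace ℝ (Fin d) | ⟪α, z⟫ = 0} y x
    simpa [norm_sub_rev] using this
end

section
/- Let Φ be a root system with Weyl group W, and let x, y be in the open positive Weyl chamber. For any w ∈ W with w ≠ id, |x - w·y|² ≥ max{ min_{α ∈ Φ_+} d(x, H_α)², min_{α ∈ Φ_+} d(y, H_α)² }, where d(·, H_α) is the distance to the hyperplane perpendicular to α. -/
local notation "⟪" x ", " y "⟫" => @inner ℝ _ _ x y

/-! Since `w ≠ 1` moves the open chamber off itself, some positive root `a` has `⟪a, w y⟫ ≤ 0`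
while `⟪a, x⟫ > 0`, so the segment from `x` to `w y` crosses the wall `H_a`, and
`d(x, H_a) ≤ |x - w y|`. Applying the same argument to `w⁻¹` and using that `w` is an isometry,
`d(y, H_b) ≤ |y - w⁻¹ x| = |x - w y|` for some positive root `b`. -/

section Wall

variable {E : Type*} [NormedAddCommGroup E] [InnerProductSpace ℝ E]

theorem infDist_inner_eq_zero_le_dist {a x v : E} (hx : 0 < ⟪a, x⟫) (hv : ⟪a, v⟫ ≤ 0) :
    Metric.infDist x {z : E | ⟪a, z⟫ = 0} ≤ dist x v := by
  -- `x + t • (v - x)` is where the segment from `x` to `v` meets the wall.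
  set t : ℝ := ⟪a, x⟫ / (⟪a, x⟫ - ⟪a, v⟫)
  have hgap : 0 < ⟪a, x⟫ - ⟪a, v⟫ := by linarith
  have ht₀ : 0 ≤ t := by positivity
  have ht₁ : t ≤ 1 := (div_le_one hgap).mpr (by linarith)
  have hmem : x + t • (v - x) ∈ {z : E | ⟪a, z⟫ = 0} := by
    simp only [Set.mem_ofPred_eq, inner_add_right, real_inner_smul_right, inner_sub_right, t]
    field_simp
    ring
  calc Metric.infDist x {z : E | ⟪a, z⟫ = 0}
      ≤ dist x (x + t • (v - x)) := Metric.infDist_le_dist_of_mem hmem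
    _ = t * dist x v := by
        rw [dist_eq_norm, sub_add_cancel_left, norm_neg, norm_smul, Real.norm_of_nonneg ht₀,
          ← dist_eq_norm', dist_comm]
    _ ≤ dist x v := mul_le_of_le_one_left dist_nonneg ht₁

theorem inf'_infDist_sq_le_dist_sq {s : Finset E} (hs : s.Nonempty) {a x v : E} (ha : a ∈ s)
    (hx : 0 < ⟪a, x⟫) (hv : ⟪a, v⟫ ≤ 0) :
    s.inf' hs (fun b => Metric.infDist x {z : E | ⟪b, z⟫ = 0} ^ 2) ≤ dist x v ^ 2 :=
  (Finset.inf'_le _ ha).trans <|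
    pow_le_pow_left₀ Metric.infDist_nonneg (infDist_inner_eq_zero_le_dist hx hv) 2

end Wall

theorem stmt_8_general {d : ℕ}
    (Φp : Finset (EuclideanSpace ℝ (Fin d))) (hΦ : Φp.Nonempty)
    (W : Subgroup (EuclideanSpace ℝ (Fin d) ≃ₗᵢ[ℝ] EuclideanSpace ℝ (Fin d)))
    (hchamber : ∀ w ∈ W, w ≠ 1 →
      ∀ z : EuclideanSpace ℝ (Fin d), (∀ a ∈ Φp, 0 < ⟪a, z⟫) →
        ¬ (∀ a ∈ Φp, 0 < ⟪a, w z⟫))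
    (x y : EuclideanSpace ℝ (Fin d))
    (hx : ∀ a ∈ Φp, 0 < ⟪a, x⟫) (hy : ∀ a ∈ Φp, 0 < ⟪a, y⟫)
    (w : EuclideanSpace ℝ (Fin d) ≃ₗᵢ[ℝ] EuclideanSpace ℝ (Fin d))
    (hw : w ∈ W) (hw1 : w ≠ 1) :
    max (Φp.inf' hΦ fun a =>
          (Metric.infDist x {z : EuclideanSpace ℝ (Fin d) | ⟪a, z⟫ = 0}) ^ 2)
        (Φp.inf' hΦ fun a =>
          (Metric.infDist y {z : EuclideanSpace ℝ (Fin d) | ⟪a, z⟫ = 0}) ^ 2)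
      ≤ ‖x - w y‖ ^ 2 := by
  rw [← dist_eq_norm]
  apply max_le
  · obtain ⟨a, ha, hwy⟩ : ∃ a ∈ Φp, ⟪a, w y⟫ ≤ 0 := by
      simpa using hchamber w hw hw1 y hy
    exact inf'_infDist_sq_le_dist_sq hΦ ha (hx a ha) hwy
  · obtain ⟨a, ha, hwx⟩ : ∃ a ∈ Φp, ⟪a, w⁻¹ x⟫ ≤ 0 := by
      simpa using hchamber w⁻¹ (inv_mem hw) (inv_ne_one.mpr hw1) x hx
    have hdist : dist y (w⁻¹ x) = dist x (w y) := by
      rw [← w.dist_map, LinearIsometryEquiv.coe_inv, w.apply_symm_apply, dist_comm]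
    simpa only [hdist] using inf'_infDist_sq_le_dist_sq hΦ ha (hy a ha) hwx

/-- For a root system `Φ` with positive roots `Φp`, Weyl group `W` and `x, y`
in the open positive Weyl chamber, for any `w ∈ W` with `w ≠ id`,
`|x - w·y|² ≥ max{ min_{α ∈ Φ_+} d(x, H_α)², min_{α ∈ Φ_+} d(y, H_α)² }`.
The fact that nontrivial elements of `W` move the open chamber off itself is supplied. -/
theorem stmt_8 {d : ℕ}
    (Φp : Finset (EuclideanSpace ℝ (Fin d))) (hΦ : Φp.Nonempty)
    (h0 : (0 : EuclideanSpace ℝ (Fin d)) ∉ Φp)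
    (W : Subgroup (EuclideanSpace ℝ (Fin d) ≃ₗᵢ[ℝ] EuclideanSpace ℝ (Fin d)))
    (hchamber : ∀ w ∈ W, w ≠ 1 →
      ∀ z : EuclideanSpace ℝ (Fin d), (∀ a ∈ Φp, 0 < ⟪a, z⟫) →
        ¬ (∀ a ∈ Φp, 0 < ⟪a, w z⟫))
    (x y : EuclideanSpace ℝ (Fin d))
    (hx : ∀ a ∈ Φp, 0 < ⟪a, x⟫) (hy : ∀ a ∈ Φp, 0 < ⟪a, y⟫)
    (w : EuclideanSpace ℝ (Fin d) ≃ₗᵢ[ℝ] EuclideanSpace ℝ (Fin d))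
    (hw : w ∈ W) (hw1 : w ≠ 1) :
    max (Φp.inf' hΦ fun a =>
          (Metric.infDist x {z : EuclideanSpace ℝ (Fin d) | ⟪a, z⟫ = 0}) ^ 2)
        (Φp.inf' hΦ fun a =>
          (Metric.infDist y {z : EuclideanSpace ℝ (Fin d) | ⟪a, z⟫ = 0}) ^ 2)
      ≤ ‖x - w y‖ ^ 2 :=
  stmt_8_general Φp hΦ W hchamber x y hx hy w hw hw1
end

section
/- Let π(x) = Π_{α ∈ Φ_+} ⟨α, x⟩ be the product of positive roots of a root system Φ in R^d, and let ∂(π) = Π_{α ∈ Φ_+} ∂_α be the corresponding constant-coefficient differential operator (composition of directional derivatives in the directions of the positive roots). Then ∂(π)π is a nonzero constant. -/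
local notation "⟪" x ", " y "⟫" => @inner ℝ _ _ x y

/-- Directional derivative `∂_v f`. -/
noncomputable def dirDeriv {d : ℕ} (v : EuclideanSpace ℝ (Fin d))
    (f : EuclideanSpace ℝ (Fin d) → ℝ) : EuclideanSpace ℝ (Fin d) → ℝ :=
  fun x => fderiv ℝ f x v

/-- Iterated directional derivatives along a list of vectors. -/
noncomputable def iterDeriv {d : ℕ} (l : List (EuclideanSpace ℝ (Fin d)))
    (f : EuclideanSpace ℝ (Fin d) → ℝ) : EuclideanSpace ℝ (Fin d) → ℝ :=
  l.foldr dirDeriv f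

/-!
Applying `∂_{g_1} ⋯ ∂_{g_n}` to `∏ i, ⟪f i, x⟫` gives the permanent of the matrix
`(⟪f i, g j⟫)`: each derivative removes one linear factor, which is the Laplace expansion of the
permanent. For `g = f` this is the permanent of the Gram matrix of `f`. If `S` is the symmetric
tensor `∑ σ, f (σ 1) ⊗ ⋯ ⊗ f (σ n)`, then `n! • perm (gram f) = ‖S‖²`, and `S ≠ 0` because
evaluated at `(x, …, x)` it equals `n! • ∏ i, ⟪f i, x⟫`, which is nonzero for a generic `x` as soon
as no `f i` vanishes.
-/

open Equiv Finset Matrix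
open scoped ContDiff

namespace Equiv.Perm

variable {n : ℕ}

def succAboveCongr (q : Fin (n + 1)) (p : Fin (n + 1) × Perm (Fin n)) : Perm (Fin (n + 1)) :=
  ((finSuccEquiv' q).trans p.2.optionCongr).trans (finSuccEquiv' p.1).symm

@[simp] lemma succAboveCongr_apply_self (q : Fin (n + 1)) (p : Fin (n + 1) × Perm (Fin n)) :
    succAboveCongr q p q = p.1 := by
  simp [succAboveCongr]

@[simp] lemma succAboveCongr_apply_succAbove (q : Fin (n + 1)) (p : Fin (n + 1) × Perm (Fin n))
    (j : Fin n) : succAboveCongr q p (q.succAbove j) = p.1.succAbove (p.2 j) := by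
  simp [succAboveCongr]

lemma succAboveCongr_bijective (q : Fin (n + 1)) : Function.Bijective (succAboveCongr q) := by
  refine (Fintype.bijective_iff_injective_and_card _).2
    ⟨?_, by simp [Fintype.card_perm, Nat.factorial_succ]⟩
  rintro ⟨i, τ⟩ ⟨i', τ'⟩ h
  obtain rfl : i = i' := by simpa using congr($h q)
  refine Prod.ext rfl (Equiv.ext fun j => ?_)
  simpa using congr($h (q.succAbove j))

end Equiv.Perm

theorem Matrix.permanent_succ_column {R : Type*} [CommSemiring R] {n : ℕ}
    (M : Matrix (Fin (n + 1)) (Fin (n + 1)) R) (q : Fin (n + 1)) :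
    M.permanent = ∑ i, M i q * (M.submatrix i.succAbove q.succAbove).permanent := by
  rw [permanent, ← (Perm.succAboveCongr_bijective q).sum_comp, Fintype.sum_prod_type]
  refine sum_congr rfl fun i _ => ?_
  rw [permanent, mul_sum]
  refine sum_congr rfl fun τ _ => ?_
  rw [Fin.prod_univ_succAbove _ q]
  simp

theorem exists_forall_inner_ne_zero {E κ : Type*} [NormedAddCommGroup E]
    [InnerProductSpace ℝ E] [Finite κ] {f : κ → E} (hf : ∀ i, f i ≠ 0) :
    ∃ x, ∀ i, ⟪f i, x⟫ ≠ 0 := by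
  by_contra! h
  obtain ⟨i, hi⟩ := Subspace.exists_eq_top_of_iUnion_eq_univ (p := fun i => (ℝ ∙ f i)ᗮ) <| by
    simpa [Set.eq_univ_iff_forall, Submodule.mem_orthogonal_singleton_iff_inner_right] using h
  simp only [Submodule.orthogonal_eq_top_iff, Submodule.span_singleton_eq_bot] at hi
  exact hf i hi

section SymmetricTensor

variable {ι κ : Type*} [Fintype ι] [Fintype κ] [DecidableEq κ]

theorem prod_inner_eq_sum (a b : κ → EuclideanSpace ℝ ι) :
    ∏ i, ⟪a i, b i⟫ = ∑ g : κ → ι, (∏ i, a i (g i)) * ∏ i, b i (g i) := by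
  calc ∏ i, ⟪a i, b i⟫ = ∏ i, ∑ k, a i k * b i k := by
        simp [PiLp.inner_apply, mul_comm]
    _ = ∑ g : κ → ι, (∏ i, a i (g i)) * ∏ i, b i (g i) := by
        simp_rw [prod_univ_sum, Fintype.piFinset_univ, prod_mul_distrib]

/-- The coefficient of `e (g 1) ⊗ ⋯ ⊗ e (g n)` in the symmetric tensor
`∑ σ, f (σ 1) ⊗ ⋯ ⊗ f (σ n)`. -/
def symTensorCoeff (f : κ → EuclideanSpace ℝ ι) (g : κ → ι) : ℝ :=
  ∑ σ : Perm κ, ∏ i, f (σ i) (g i)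

theorem sum_symTensorCoeff_mul_prod (f : κ → EuclideanSpace ℝ ι) (x : EuclideanSpace ℝ ι) :
    ∑ g, symTensorCoeff f g * ∏ i, x (g i) = Fintype.card (Perm κ) * ∏ i, ⟪f i, x⟫ := by
  simp_rw [symTensorCoeff, sum_mul]
  rw [sum_comm]
  simp_rw [← prod_inner_eq_sum, Equiv.prod_comp _ (fun i => ⟪f i, x⟫)]
  simp

theorem sum_symTensorCoeff_sq (f : κ → EuclideanSpace ℝ ι) :
    ∑ g, symTensorCoeff f g ^ 2 = Fintype.card (Perm κ) * (gram ℝ f).permanent := by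
  have hτ (τ : Perm κ) : ∑ σ : Perm κ, ∏ i, ⟪f (σ i), f (τ i)⟫ = (gram ℝ f).permanent := by
    rw [permanent, ← Equiv.sum_comp (Equiv.mulRight τ)]
    exact sum_congr rfl fun σ _ => Equiv.prod_comp τ fun i => ⟪f (σ i), f i⟫
  calc ∑ g, symTensorCoeff f g ^ 2
      = ∑ τ : Perm κ, ∑ σ : Perm κ, ∑ g : κ → ι, (∏ i, f (σ i) (g i)) * ∏ i, f (τ i) (g i) := by
        simp_rw [sq, symTensorCoeff, sum_mul_sum, sum_comm (γ := κ → ι)]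
        exact sum_comm
    _ = ∑ τ : Perm κ, ∑ σ : Perm κ, ∏ i, ⟪f (σ i), f (τ i)⟫ := by simp_rw [prod_inner_eq_sum]
    _ = Fintype.card (Perm κ) * (gram ℝ f).permanent := by simp [hτ]

theorem permanent_gram_pos {f : κ → EuclideanSpace ℝ ι} (hf : ∀ i, f i ≠ 0) :
    0 < (gram ℝ f).permanent := by
  have hcard : (0 : ℝ) < Fintype.card (Perm κ) := by exact_mod_cast Fintype.card_pos
  have hsq := sum_symTensorCoeff_sq f
  have hnonneg : 0 ≤ (gram ℝ f).permanent :=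
    nonneg_of_mul_nonneg_right (hsq ▸ sum_nonneg fun g _ => sq_nonneg _) hcard
  refine hnonneg.lt_of_ne fun hzero => ?_
  have hcoeff : ∀ g, symTensorCoeff f g = 0 := by
    rw [← hzero, mul_zero, sum_eq_zero_iff_of_nonneg fun g _ => sq_nonneg _] at hsq
    simpa using hsq
  obtain ⟨x, hx⟩ := exists_forall_inner_ne_zero hf
  have hprod := sum_symTensorCoeff_mul_prod f x
  simp only [hcoeff, zero_mul, sum_const_zero] at hprod
  exact mul_ne_zero hcard.ne' (prod_ne_zero_iff.2 fun i _ => hx i) hprod.symm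

end SymmetricTensor

section IteratedDirectionalDerivative

variable {d : ℕ}

theorem ContDiff.dirDeriv {f : EuclideanSpace ℝ (Fin d) → ℝ} (hf : ContDiff ℝ ∞ f)
    (v : EuclideanSpace ℝ (Fin d)) : ContDiff ℝ ∞ (dirDeriv v f) :=
  (hf.fderiv_right le_rfl).clm_apply contDiff_const

theorem ContDiff.iterDeriv {f : EuclideanSpace ℝ (Fin d) → ℝ} (hf : ContDiff ℝ ∞ f)
    (l : List (EuclideanSpace ℝ (Fin d))) : ContDiff ℝ ∞ (iterDeriv l f) := by
  induction l with
  | nil => exact hf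
  | cons v l ih => exact ih.dirDeriv v

theorem iterDeriv_append_singleton (l : List (EuclideanSpace ℝ (Fin d)))
    (v : EuclideanSpace ℝ (Fin d)) (f : EuclideanSpace ℝ (Fin d) → ℝ) :
    iterDeriv (l ++ [v]) f = iterDeriv l (dirDeriv v f) := by
  simp [iterDeriv]

theorem dirDeriv_sum_mul {ι : Type*} (s : Finset ι) (c : ι → ℝ)
    {F : ι → EuclideanSpace ℝ (Fin d) → ℝ} (hF : ∀ i, Differentiable ℝ (F i))
    (v : EuclideanSpace ℝ (Fin d)) :
    dirDeriv v (fun x => ∑ i ∈ s, c i * F i x) =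
      fun x => ∑ i ∈ s, c i * dirDeriv v (F i) x := by
  funext x
  rw [dirDeriv, fderiv_fun_sum fun i _ => ((hF i).const_mul (c i)).differentiableAt]
  simp [fderiv_const_mul (hF _).differentiableAt, dirDeriv]

theorem iterDeriv_sum_mul {ι : Type*} (s : Finset ι) (c : ι → ℝ)
    {F : ι → EuclideanSpace ℝ (Fin d) → ℝ} (hF : ∀ i, ContDiff ℝ ∞ (F i))
    (l : List (EuclideanSpace ℝ (Fin d))) :
    iterDeriv l (fun x => ∑ i ∈ s, c i * F i x) =
      fun x => ∑ i ∈ s, c i * iterDeriv l (F i) x := by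
  induction l with
  | nil => rfl
  | cons v l ih =>
    change dirDeriv v (iterDeriv l _) = fun x => ∑ i ∈ s, c i * dirDeriv v (iterDeriv l (F i)) x
    rw [ih, dirDeriv_sum_mul s c fun i => ((hF i).iterDeriv l).differentiable (by simp)]

end IteratedDirectionalDerivative

section ProductOfLinearForms

variable {d n : ℕ}

theorem contDiff_prod_inner (f : Fin n → EuclideanSpace ℝ (Fin d)) :
    ContDiff ℝ ∞ fun x => ∏ i, ⟪f i, x⟫ :=
  contDiff_prod fun _ _ => contDiff_const.inner ℝ contDiff_id

theorem dirDeriv_prod_inner (f : Fin (n + 1) → EuclideanSpace ℝ (Fin d))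
    (v : EuclideanSpace ℝ (Fin d)) :
    dirDeriv v (fun x => ∏ i, ⟪f i, x⟫) =
      fun x => ∑ i, ⟪f i, v⟫ * ∏ j, ⟪f (i.succAbove j), x⟫ := by
  funext x
  have hderiv : HasFDerivAt (fun x => ∏ i, ⟪f i, x⟫)
      (∑ i, (∏ j ∈ univ.erase i, ⟪f j, x⟫) • innerSL ℝ (f i)) x :=
    HasFDerivAt.finsetProd fun i _ => (innerSL ℝ (f i)).hasFDerivAt
  rw [dirDeriv, hderiv.fderiv]
  simp [← compl_singleton, ← Fin.image_succAbove_univ,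
    prod_image Fin.succAbove_right_injective.injOn, mul_comm]

theorem iterDeriv_ofFn_prod_inner (f g : Fin n → EuclideanSpace ℝ (Fin d)) :
    iterDeriv (List.ofFn g) (fun x => ∏ i, ⟪f i, x⟫) =
      fun _ => (Matrix.of fun i j => ⟪f i, g j⟫).permanent := by
  induction n with
  | zero => simp [iterDeriv, permanent_isEmpty]
  | succ n ih =>
    rw [List.ofFn_succ', List.concat_eq_append, iterDeriv_append_singleton, dirDeriv_prod_inner,
      iterDeriv_sum_mul _ _ fun _ => contDiff_prod_inner _]
    funext x
    rw [permanent_succ_column _ (Fin.last n)]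
    simp only [ih, Fin.succAbove_last]
    rfl

end ProductOfLinearForms

theorem stmt_10_general {d : ℕ}
    (Φ Φp : Finset (EuclideanSpace ℝ (Fin d)))
    (h0 : (0 : EuclideanSpace ℝ (Fin d)) ∉ Φ)
    (hpos : Φp ⊆ Φ) :
    ∃ c : ℝ, c ≠ 0 ∧
      iterDeriv Φp.toList (fun x => ∏ a ∈ Φp, ⟪a, x⟫) = fun _ => c := by
  set L := Φp.toList
  have hπ : (fun x => ∏ a ∈ Φp, ⟪a, x⟫) = fun x => ∏ i, ⟪L.get i, x⟫ := by
    funext x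
    rw [← prod_map_toList, ← Fin.prod_univ_fun_getElem]
    rfl
  have hL : ∀ i, L.get i ≠ 0 := fun i h =>
    h0 (h ▸ hpos (mem_toList.1 (List.get_mem L i)))
  refine ⟨_, (permanent_gram_pos hL).ne', ?_⟩
  have hderiv := iterDeriv_ofFn_prod_inner L.get L.get
  rwa [List.ofFn_get, ← hπ] at hderiv

/-- For a root system `Φ = Φp ∪ (-Φp)` in `ℝ^d` with positive subsystem
`Φp` and `π(x) = ∏_{α ∈ Φ_+} ⟪α, x⟫`, the constant-coefficient differential operator
`∂(π) = ∏_{α ∈ Φ_+} ∂_α` applied to `π` is a nonzero constant. -/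
theorem stmt_10 {d : ℕ}
    (Φ Φp : Finset (EuclideanSpace ℝ (Fin d)))
    (h0 : (0 : EuclideanSpace ℝ (Fin d)) ∉ Φ)
    (hneg : ∀ a ∈ Φ, -a ∈ Φ)
    (hrefl : ∀ a ∈ Φ, ∀ b ∈ Φ, b - (2 * ⟪a, b⟫ / ‖a‖ ^ 2) • a ∈ Φ)
    (hpos : Φp ⊆ Φ)
    (hsplit : ∀ a ∈ Φ, (a ∈ Φp ↔ ¬ (-a ∈ Φp))) :
    ∃ c : ℝ, c ≠ 0 ∧
      iterDeriv Φp.toList (fun x => ∏ a ∈ Φp, ⟪a, x⟫) = fun _ => c :=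
  stmt_10_general Φ Φp h0 hpos
end

section
/- Let m > 0, M > m/2, and A, B > 0. Then there exist constants 0 < c₁ ≤ c₂ depending only on m and M such that c₁ ≤ ( ∫_0^1 (u(1-u))^{m/2-1} (A + B u)^{-M} du ) · A^{M - m/2} (A+B)^{m/2} ≤ c₂. -/
open MeasureTheory Set Real

/-! With `h = m / 2` and `s = A / (A + B) ∈ (0, 1]` one has `A + B u = (A + B) (s + (1 - s) u)`,
so the claim is `∫₀¹ (u (1 - u))^(h-1) (s + (1 - s) u)^(-M) du ≍ s^(h-M)` uniformly in `s`.
For the lower bound, on `u < s / 2` the integrand is `≳ s^(-M) u^(h-1)`. For the upper bound,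
`s + (1 - s) u ≥ max s u` and `∫₀^∞ u^(h-1) (max s u)^(-M) du = s^(h-M) (1/h + 1/(M-h))`, finite
since `M > h`; near `u = 1` only the integrable factor `(1 - u)^(h-1)` remains, and `s^(h-M) ≥ 1`
absorbs its contribution. -/

lemma rpow_le_max_one_half_rpow (q : ℝ) {x : ℝ} (h1 : 1 / 2 ≤ x) (h2 : x ≤ 1) :
    x ^ q ≤ max 1 ((1 / 2 : ℝ) ^ q) := by
  rcases le_or_gt 0 q with hq | hq
  · exact le_max_of_le_left (rpow_le_one (by linarith) h2 hq)
  · exact le_max_of_le_right (rpow_le_rpow_of_nonpos (by norm_num) h1 hq.le)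

lemma min_one_half_rpow_le_rpow (q : ℝ) {x : ℝ} (h1 : 1 / 2 ≤ x) (h2 : x ≤ 1) :
    min 1 ((1 / 2 : ℝ) ^ q) ≤ x ^ q := by
  rcases le_or_gt 0 q with hq | hq
  · exact (min_le_right _ _).trans (rpow_le_rpow (by norm_num) h1 hq)
  · exact (min_le_left _ _).trans (one_le_rpow_of_pos_of_le_one_of_nonpos (by linarith) h2 hq.le)

section

variable {h M s : ℝ}

lemma integral_Ioo_zero_rpow_sub_one (hh : 0 < h) {t : ℝ} (ht : 0 ≤ t) :
    ∫ u in Ioo 0 t, u ^ (h - 1) = t ^ h / h := by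
  rw [← integral_Ioc_eq_integral_Ioo, ← intervalIntegral.integral_of_le ht,
    integral_rpow (Or.inl (by linarith)), zero_rpow (by linarith)]
  simp

lemma integrableOn_one_sub_rpow_sub_one (hh : 0 < h) :
    IntegrableOn (fun u : ℝ ↦ (1 - u) ^ (h - 1)) (Ioo 0 1) := by
  have := (intervalIntegral.intervalIntegrable_rpow' (a := 0) (b := 1) (r := h - 1)
    (by linarith)).comp_sub_left 1
  norm_num [intervalIntegrable_iff] at this
  exact this.mono_set Ioo_subset_Ioc_self

lemma integral_one_sub_rpow_sub_one (hh : 0 < h) :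
    ∫ u in Ioo 0 1, (1 - u) ^ (h - 1) = 1 / h := by
  rw [← integral_Ioc_eq_integral_Ioo, ← intervalIntegral.integral_of_le zero_le_one,
    intervalIntegral.integral_comp_sub_left (fun u ↦ u ^ (h - 1)), sub_self, sub_zero,
    integral_rpow (Or.inl (by linarith)), zero_rpow (by linarith)]
  simp

lemma integrableOn_rpow_mul_max_rpow_neg (hs : 0 < s) (hh : 0 < h) (hM : h < M) :
    IntegrableOn (fun u ↦ u ^ (h - 1) * max s u ^ (-M)) (Ioi 0) := by
  rw [← Ioc_union_Ioi_eq_Ioi hs.le]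
  refine IntegrableOn.union ?_ ?_
  · rw [integrableOn_Ioc_iff_integrableOn_Ioo]
    have hpow : IntegrableOn (fun u : ℝ ↦ u ^ (h - 1)) (Ioo 0 s) :=
      (intervalIntegral.integrableOn_Ioo_rpow_iff hs).2 (by linarith)
    refine IntegrableOn.congr_fun (hpow.mul_const (s ^ (-M))) (fun u hu ↦ ?_) measurableSet_Ioo
    rw [max_eq_left hu.2.le]
  · refine (integrableOn_Ioi_rpow_of_lt (a := h - 1 - M) (by linarith) hs).congr_fun
      (fun u hu ↦ ?_) measurableSet_Ioi
    rw [max_eq_right (le_of_lt hu), ← rpow_add (hs.trans hu), sub_eq_add_neg]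

lemma integral_rpow_mul_max_rpow_neg (hs : 0 < s) (hh : 0 < h) (hM : h < M) :
    ∫ u in Ioi 0, u ^ (h - 1) * max s u ^ (-M) = s ^ (h - M) * (1 / h + 1 / (M - h)) := by
  have hint := integrableOn_rpow_mul_max_rpow_neg hs hh hM
  rw [← Ioc_union_Ioi_eq_Ioi hs.le, setIntegral_union Ioc_disjoint_Ioi_same measurableSet_Ioi
      (hint.mono_set Ioc_subset_Ioi_self) (hint.mono_set (Ioi_subset_Ioi hs.le)),
    setIntegral_congr_fun measurableSet_Ioc (g := fun u ↦ u ^ (h - 1) * s ^ (-M))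
      (fun u hu ↦ by rw [max_eq_left hu.2]),
    setIntegral_congr_fun measurableSet_Ioi (g := fun u ↦ u ^ (h - 1 - M))
      (fun u hu ↦ by
        rw [max_eq_right (le_of_lt hu), ← rpow_add (hs.trans hu), ← sub_eq_add_neg]),
    integral_mul_const, integral_Ioc_eq_integral_Ioo, integral_Ioo_zero_rpow_sub_one hh hs.le,
    integral_Ioi_rpow_of_lt (by linarith) hs, show h - 1 - M + 1 = h - M by ring,
    show s ^ (h - M) = s ^ h * s ^ (-M) by rw [← rpow_add hs, sub_eq_add_neg]]
  field_simp [show M - h ≠ 0 by linarith, show h - M ≠ 0 by linarith]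
  ring

lemma max_le_add_one_sub_mul {u : ℝ} (hs0 : 0 ≤ s) (hs1 : s ≤ 1) (hu0 : 0 ≤ u) (hu1 : u ≤ 1) :
    max s u ≤ s + (1 - s) * u :=
  max_le (by nlinarith) (by nlinarith)

noncomputable def betaKernel (h M s u : ℝ) : ℝ :=
  (u * (1 - u)) ^ (h - 1) * (s + (1 - s) * u) ^ (-M)

lemma measurable_betaKernel : Measurable (betaKernel h M s) := by
  unfold betaKernel
  fun_prop

lemma betaKernel_nonneg (hs0 : 0 ≤ s) (hs1 : s ≤ 1) {u : ℝ} (hu : u ∈ Ioo 0 1) :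
    0 ≤ betaKernel h M s u :=
  mul_nonneg (rpow_nonneg (mul_nonneg hu.1.le (by linarith [hu.2])) _)
    (rpow_nonneg (by nlinarith [hu.1]) _)

lemma betaKernel_le (hs0 : 0 < s) (hs1 : s ≤ 1) (hM : 0 ≤ M) {u : ℝ} (hu : u ∈ Ioo 0 1) :
    betaKernel h M s u ≤
      max 1 ((1 / 2 : ℝ) ^ (h - 1)) *
        (u ^ (h - 1) * max s u ^ (-M) + 2 ^ M * (1 - u) ^ (h - 1)) := by
  obtain ⟨hu0, hu1⟩ := hu
  set κ := max 1 ((1 / 2 : ℝ) ^ (h - 1))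
  have hmax : (s + (1 - s) * u) ^ (-M) ≤ max s u ^ (-M) :=
    rpow_le_rpow_of_nonpos (lt_max_of_lt_left hs0)
      (max_le_add_one_sub_mul hs0.le hs1 hu0.le hu1.le) (neg_nonpos.2 hM)
  have hu_pow := rpow_nonneg hu0.le (h - 1)
  have hu'_pow := rpow_nonneg (sub_nonneg.2 hu1.le) (h - 1)
  have hmax_pow := rpow_nonneg (hs0.le.trans (le_max_left s u)) (-M)
  unfold betaKernel
  rw [mul_rpow hu0.le (sub_nonneg.2 hu1.le)]
  rcases le_or_gt u (1 / 2) with hu | hu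
  · have h1u : (1 - u) ^ (h - 1) ≤ κ := rpow_le_max_one_half_rpow _ (by linarith) (by linarith)
    calc u ^ (h - 1) * (1 - u) ^ (h - 1) * (s + (1 - s) * u) ^ (-M)
        ≤ u ^ (h - 1) * κ * max s u ^ (-M) := by gcongr
      _ ≤ κ * (u ^ (h - 1) * max s u ^ (-M) + 2 ^ M * (1 - u) ^ (h - 1)) := by
        nlinarith [le_max_left 1 ((1 / 2 : ℝ) ^ (h - 1)), rpow_nonneg zero_le_two M,
          mul_nonneg (rpow_nonneg zero_le_two M) hu'_pow]
  · have hu' : u ^ (h - 1) ≤ κ := rpow_le_max_one_half_rpow _ hu.le hu1.le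
    have h2 : max s u ^ (-M) ≤ 2 ^ M := by
      calc max s u ^ (-M) ≤ (1 / 2 : ℝ) ^ (-M) :=
            rpow_le_rpow_of_nonpos (by norm_num) (hu.le.trans (le_max_right s u))
              (neg_nonpos.2 hM)
        _ = 2 ^ M := by rw [one_div, inv_rpow zero_le_two, rpow_neg zero_le_two, inv_inv]
    calc u ^ (h - 1) * (1 - u) ^ (h - 1) * (s + (1 - s) * u) ^ (-M)
        ≤ κ * (1 - u) ^ (h - 1) * 2 ^ M := by gcongr; exact hmax.trans h2
      _ ≤ κ * (u ^ (h - 1) * max s u ^ (-M) + 2 ^ M * (1 - u) ^ (h - 1)) := by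
        nlinarith [le_max_left 1 ((1 / 2 : ℝ) ^ (h - 1)), mul_nonneg hu_pow hmax_pow]

lemma integrableOn_betaKernel (hs0 : 0 < s) (hs1 : s ≤ 1) (hh : 0 < h) (hM : h < M) :
    IntegrableOn (betaKernel h M s) (Ioo 0 1) := by
  refine Integrable.mono' ((((integrableOn_rpow_mul_max_rpow_neg hs0 hh hM).mono_set
    Ioo_subset_Ioi_self).add ((integrableOn_one_sub_rpow_sub_one hh).const_mul (2 ^ M))).const_mul
    (max 1 ((1 / 2 : ℝ) ^ (h - 1)))) measurable_betaKernel.aestronglyMeasurable ?_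
  filter_upwards [ae_restrict_mem measurableSet_Ioo] with u hu
  rw [Real.norm_of_nonneg (betaKernel_nonneg hs0.le hs1 hu)]
  exact betaKernel_le hs0 hs1 (hh.trans hM).le hu

lemma integral_betaKernel_le (hs0 : 0 < s) (hs1 : s ≤ 1) (hh : 0 < h) (hM : h < M) :
    ∫ u in Ioo 0 1, betaKernel h M s u ≤
      max 1 ((1 / 2 : ℝ) ^ (h - 1)) * (1 / h + 1 / (M - h) + 2 ^ M / h) * s ^ (h - M) := by
  set κ := max 1 ((1 / 2 : ℝ) ^ (h - 1))
  have hmax := integrableOn_rpow_mul_max_rpow_neg hs0 hh hM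
  have hmax' := hmax.mono_set (Ioo_subset_Ioi_self : Ioo (0 : ℝ) 1 ⊆ Ioi 0)
  have hone := integrableOn_one_sub_rpow_sub_one hh
  have hs_pow : 1 ≤ s ^ (h - M) := one_le_rpow_of_pos_of_le_one_of_nonpos hs0 hs1 (by linarith)
  have hmax_le : ∫ u in Ioo 0 1, u ^ (h - 1) * max s u ^ (-M) ≤
      ∫ u in Ioi 0, u ^ (h - 1) * max s u ^ (-M) :=
    setIntegral_mono_set hmax (ae_restrict_of_forall_mem measurableSet_Ioi fun u hu ↦
      mul_nonneg (rpow_nonneg (le_of_lt hu) _)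
        (rpow_nonneg ((le_of_lt hu).trans (le_max_right _ _)) _))
      Ioo_subset_Ioi_self.eventuallyLE
  calc ∫ u in Ioo 0 1, betaKernel h M s u
      ≤ ∫ u in Ioo 0 1, κ * (u ^ (h - 1) * max s u ^ (-M) + 2 ^ M * (1 - u) ^ (h - 1)) :=
        setIntegral_mono_on (integrableOn_betaKernel hs0 hs1 hh hM)
          ((hmax'.add (hone.const_mul _)).const_mul _) measurableSet_Ioo
          fun u hu ↦ betaKernel_le hs0 hs1 (hh.trans hM).le hu
    _ = κ * ((∫ u in Ioo 0 1, u ^ (h - 1) * max s u ^ (-M)) + 2 ^ M * (1 / h)) := by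
        rw [integral_const_mul, integral_add hmax' (hone.const_mul _), integral_const_mul,
          integral_one_sub_rpow_sub_one hh]
    _ ≤ κ * (s ^ (h - M) * (1 / h + 1 / (M - h)) + 2 ^ M / h * s ^ (h - M)) := by
        rw [← integral_rpow_mul_max_rpow_neg hs0 hh hM]
        refine mul_le_mul_of_nonneg_left (add_le_add hmax_le ?_)
          (zero_le_one.trans (le_max_left _ _))
        rw [mul_one_div]
        exact le_mul_of_one_le_right (by positivity) hs_pow
    _ = κ * (1 / h + 1 / (M - h) + 2 ^ M / h) * s ^ (h - M) := by ring

lemma le_integral_betaKernel (hs0 : 0 < s) (hs1 : s ≤ 1) (hh : 0 < h) (hM : h < M) :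
    min 1 ((1 / 2 : ℝ) ^ (h - 1)) * 2 ^ (-(M + h)) / h * s ^ (h - M) ≤
      ∫ u in Ioo 0 1, betaKernel h M s u := by
  set κ := min 1 ((1 / 2 : ℝ) ^ (h - 1))
  have hκ : 0 ≤ κ := le_min zero_le_one (rpow_nonneg (by norm_num) _)
  have hint := integrableOn_betaKernel hs0 hs1 hh hM
  calc κ * 2 ^ (-(M + h)) / h * s ^ (h - M)
      = ∫ u in Ioo 0 (s / 2), κ * (2 * s) ^ (-M) * u ^ (h - 1) := by
        rw [integral_const_mul, integral_Ioo_zero_rpow_sub_one hh (by positivity),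
          mul_rpow zero_le_two hs0.le, div_rpow hs0.le zero_le_two, rpow_sub hs0, rpow_neg hs0.le,
          rpow_neg zero_le_two, rpow_neg zero_le_two, rpow_add two_pos]
        field_simp
    _ ≤ ∫ u in Ioo 0 (s / 2), betaKernel h M s u := by
        refine setIntegral_mono_on (((intervalIntegral.integrableOn_Ioo_rpow_iff
          (by positivity)).2 (by linarith)).const_mul _)
          (hint.mono_set (Ioo_subset_Ioo_right (by linarith))) measurableSet_Ioo fun u hu ↦ ?_
        obtain ⟨hu0, hu1⟩ := hu
        have h1u : κ ≤ (1 - u) ^ (h - 1) := min_one_half_rpow_le_rpow _ (by linarith) (by linarith)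
        have h2s : (2 * s) ^ (-M) ≤ (s + (1 - s) * u) ^ (-M) :=
          rpow_le_rpow_of_nonpos (by nlinarith) (by nlinarith) (by linarith)
        unfold betaKernel
        rw [mul_rpow hu0.le (by linarith)]
        calc κ * (2 * s) ^ (-M) * u ^ (h - 1)
            ≤ (1 - u) ^ (h - 1) * (s + (1 - s) * u) ^ (-M) * u ^ (h - 1) := by
              gcongr
              exact hκ.trans h1u
          _ = _ := by ring
    _ ≤ ∫ u in Ioo 0 1, betaKernel h M s u :=
        setIntegral_mono_set hint
          (ae_restrict_of_forall_mem measurableSet_Ioo fun u hu ↦ betaKernel_nonneg hs0.le hs1 hu)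
          (Ioo_subset_Ioo_right (by linarith)).eventuallyLE

lemma integral_rpow_mul_add_mul_rpow_neg_eq {A B : ℝ} (hA : 0 < A) (hB : 0 ≤ B) :
    ∫ u in Ioo 0 1, (u * (1 - u)) ^ (h - 1) * (A + B * u) ^ (-M) =
      (A + B) ^ (-M) * ∫ u in Ioo 0 1, betaKernel h M (A / (A + B)) u := by
  rw [← integral_const_mul]
  refine setIntegral_congr_fun measurableSet_Ioo fun u hu ↦ ?_
  have hAB : A + B * u = (A + B) * (A / (A + B) + (1 - A / (A + B)) * u) := by
    field_simp
    ring
  have hu : 0 ≤ A / (A + B) + (1 - A / (A + B)) * u := by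
    have hpos : 0 < A + B * u := by nlinarith [hu.1]
    exact (pos_of_mul_pos_right (hAB ▸ hpos) (by linarith)).le
  unfold betaKernel
  rw [hAB, mul_rpow (by linarith) hu]
  ring

lemma integral_rpow_mul_add_mul_rpow_neg_mul_mem_Icc (hh : 0 < h) (hM : h < M) {A B : ℝ}
    (hA : 0 < A) (hB : 0 ≤ B) :
    (∫ u in Ioo 0 1, (u * (1 - u)) ^ (h - 1) * (A + B * u) ^ (-M)) * (A ^ (M - h) * (A + B) ^ h) ∈
      Icc (min 1 ((1 / 2 : ℝ) ^ (h - 1)) * 2 ^ (-(M + h)) / h)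
        (max 1 ((1 / 2 : ℝ) ^ (h - 1)) * (1 / h + 1 / (M - h) + 2 ^ M / h)) := by
  set s := A / (A + B)
  have hs0 : 0 < s := by positivity
  have hs1 : s ≤ 1 := (div_le_one (by positivity)).2 (by linarith)
  have hscale : (A + B) ^ (-M) * (A ^ (M - h) * (A + B) ^ h) = (s ^ (h - M))⁻¹ := by
    rw [← rpow_neg hs0.le, neg_sub, div_rpow hA.le (by positivity), mul_left_comm,
      ← rpow_add (by positivity), show -M + h = -(M - h) by ring, rpow_neg (by positivity),
      div_eq_mul_inv]
  have hspos : 0 < s ^ (h - M) := rpow_pos_of_pos hs0 _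
  rw [integral_rpow_mul_add_mul_rpow_neg_eq hA hB, mul_right_comm, hscale, inv_mul_eq_div,
    mem_Icc, le_div_iff₀ hspos, div_le_iff₀ hspos]
  exact ⟨le_integral_betaKernel hs0 hs1 hh hM, integral_betaKernel_le hs0 hs1 hh hM⟩

end

/-- For `m > 0`, `M > m/2`, there are constants `0 < c₁ ≤ c₂` depending
only on `m` and `M` such that for all `A, B > 0`,
`∫_0^1 (u(1-u))^{m/2-1} (A + Bu)^{-M} du ≍ A^{-(M-m/2)} (A+B)^{-m/2}`. -/
theorem stmt_14 (m M : ℝ) (hm : 0 < m) (hM : m / 2 < M) :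
    ∃ c₁ c₂ : ℝ, 0 < c₁ ∧ c₁ ≤ c₂ ∧
      ∀ A B : ℝ, 0 < A → 0 < B →
        c₁ ≤ (∫ u in Set.Ioo (0 : ℝ) 1, (u * (1 - u)) ^ (m / 2 - 1) * (A + B * u) ^ (-M))
              * (A ^ (M - m / 2) * (A + B) ^ (m / 2)) ∧
        (∫ u in Set.Ioo (0 : ℝ) 1, (u * (1 - u)) ^ (m / 2 - 1) * (A + B * u) ^ (-M))
              * (A ^ (M - m / 2) * (A + B) ^ (m / 2)) ≤ c₂ := by
  have hh : 0 < m / 2 := by positivity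
  have bounds := fun A B (hA : 0 < A) (hB : 0 < B) ↦
    integral_rpow_mul_add_mul_rpow_neg_mul_mem_Icc hh hM hA hB.le
  refine ⟨_, _, ?_, (bounds 1 1 one_pos one_pos).1.trans (bounds 1 1 one_pos one_pos).2, bounds⟩
  positivity
end

section
/- Let m > 0 and A, B > 0. Then there exist constants 0 < c₁ ≤ c₂ depending only on m such that c₁ ≤ ( ∫_0^1 (u(1-u))^{m/2-1} (A + B u)^{-m/2} du ) · (A+B)^{m/2} / ln(2(A+B)/A) ≤ c₂. -/
open MeasureTheory intervalIntegral Set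

private lemma rpow_bnd_hi {c x r : ℝ} (hc : 0 < c) (hcx : c ≤ x) (hx1 : x ≤ 1) :
    x ^ r ≤ max 1 (c ^ r) := by
  rcases le_or_gt 0 r with hr | hr
  · exact le_max_of_le_left (Real.rpow_le_one (by linarith) hx1 hr)
  · exact le_max_of_le_right (Real.rpow_le_rpow_of_nonpos hc hcx hr.le)

private lemma rpow_bnd_lo {c x r : ℝ} (hc : 0 < c) (hcx : c ≤ x) (hx1 : x ≤ 1) :
    min 1 (c ^ r) ≤ x ^ r := by
  rcases le_or_gt 0 r with hr | hr
  · exact le_trans (min_le_right _ _) (Real.rpow_le_rpow hc.le hcx hr)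
  · refine le_trans (min_le_left _ _) ?_
    calc (1:ℝ) = 1 ^ r := (Real.one_rpow r).symm
    _ ≤ x ^ r := Real.rpow_le_rpow_of_nonpos (by linarith) hx1 hr.le

private lemma meas_f (s A B : ℝ) :
    Measurable fun u : ℝ => (u * (1 - u)) ^ (s - 1) * (A + B * u) ^ (-s) := by
  fun_prop

private lemma f_eq {s A B u : ℝ} (hu0 : 0 ≤ u) (hu1 : u ≤ 1) :
    (u * (1 - u)) ^ (s - 1) * (A + B * u) ^ (-s)
      = u ^ (s - 1) * ((1 - u) ^ (s - 1) * (A + B * u) ^ (-s)) := by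
  rw [Real.mul_rpow hu0 (by linarith), mul_assoc]

private lemma f_nonneg {s A B u : ℝ} (hu0 : 0 ≤ u) (hu1 : u ≤ 1) (hAB : 0 ≤ A + B * u) :
    0 ≤ (u * (1 - u)) ^ (s - 1) * (A + B * u) ^ (-s) :=
  mul_nonneg (Real.rpow_nonneg (mul_nonneg hu0 (by linarith)) _) (Real.rpow_nonneg hAB _)

private lemma inv_rpow_neg {c : ℝ} (hc : 0 ≤ c) (s : ℝ) : (c⁻¹) ^ (-s) = c ^ s := by
  rw [Real.inv_rpow hc, Real.rpow_neg hc, inv_inv]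

private lemma int_left {s A B : ℝ} (hs : 0 < s) (hA : 0 < A) (hB : 0 < B) :
    IntervalIntegrable (fun u : ℝ => (u * (1 - u)) ^ (s - 1) * (A + B * u) ^ (-s))
      volume 0 (1/2) := by
  rw [intervalIntegrable_iff_integrableOn_Ioc_of_le (by norm_num)]
  have hg : IntegrableOn
      (fun u : ℝ => max 1 ((2:ℝ)⁻¹ ^ (s-1)) * A ^ (-s) * u ^ (s-1))
      (Ioc (0:ℝ) (1/2)) volume := by
    have := (intervalIntegrable_rpow' (a := 0) (b := 1/2)
      (show (-1:ℝ) < s - 1 by linarith)).const_mul (max 1 ((2:ℝ)⁻¹ ^ (s-1)) * A ^ (-s))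
    rwa [intervalIntegrable_iff_integrableOn_Ioc_of_le (by norm_num)] at this
  refine MeasureTheory.Integrable.mono hg (meas_f s A B).aestronglyMeasurable.restrict ?_
  filter_upwards [ae_restrict_mem measurableSet_Ioc] with u hu
  obtain ⟨hu0, hu1⟩ := hu
  have h1u : (0:ℝ) ≤ 1 - u := by linarith
  have hf0 : (0:ℝ) ≤ (u * (1 - u)) ^ (s - 1) * (A + B * u) ^ (-s) :=
    mul_nonneg (Real.rpow_nonneg (mul_nonneg hu0.le h1u) _) (Real.rpow_nonneg (by positivity) _)
  rw [Real.norm_of_nonneg hf0, Real.norm_of_nonneg (by positivity),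
    f_eq hu0.le (by linarith)]
  have hb1 : (1 - u) ^ (s-1) ≤ max 1 ((2:ℝ)⁻¹ ^ (s-1)) :=
    rpow_bnd_hi (by norm_num) (by linarith) (by linarith)
  have hb2 : (A + B * u) ^ (-s) ≤ A ^ (-s) :=
    Real.rpow_le_rpow_of_nonpos hA (by nlinarith) (by linarith)
  calc u ^ (s-1) * ((1 - u) ^ (s-1) * (A + B * u) ^ (-s))
      ≤ u ^ (s-1) * (max 1 ((2:ℝ)⁻¹ ^ (s-1)) * A ^ (-s)) := by
        refine mul_le_mul_of_nonneg_left ?_ (Real.rpow_nonneg hu0.le _)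
        exact mul_le_mul hb1 hb2 (Real.rpow_nonneg (by positivity) _)
          (le_max_of_le_left zero_le_one)
    _ = max 1 ((2:ℝ)⁻¹ ^ (s-1)) * A ^ (-s) * u ^ (s-1) := by ring

private lemma int_1mu (s : ℝ) (hs : 0 < s) :
    IntervalIntegrable (fun u : ℝ => (1 - u) ^ (s - 1)) volume (1/2) 1 := by
  have := (intervalIntegrable_rpow' (a := 0) (b := 1/2)
    (show (-1:ℝ) < s - 1 by linarith)).comp_sub_left 1
  norm_num at this
  exact this.symm

private lemma int_right {s A B : ℝ} (hs : 0 < s) (hA : 0 < A) (hB : 0 < B) :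
    IntervalIntegrable (fun u : ℝ => (u * (1 - u)) ^ (s - 1) * (A + B * u) ^ (-s))
      volume (1/2) 1 := by
  rw [intervalIntegrable_iff_integrableOn_Ioc_of_le (by norm_num)]
  have hg : IntegrableOn
      (fun u : ℝ => max 1 ((2:ℝ)⁻¹ ^ (s-1)) * A ^ (-s) * (1 - u) ^ (s-1))
      (Ioc (1/2:ℝ) 1) volume := by
    have := (int_1mu s hs).const_mul (max 1 ((2:ℝ)⁻¹ ^ (s-1)) * A ^ (-s))
    rwa [intervalIntegrable_iff_integrableOn_Ioc_of_le (by norm_num)] at this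
  refine MeasureTheory.Integrable.mono hg (meas_f s A B).aestronglyMeasurable.restrict ?_
  filter_upwards [ae_restrict_mem measurableSet_Ioc] with u hu
  obtain ⟨hu0, hu1⟩ := hu
  have h1u : (0:ℝ) ≤ 1 - u := by linarith
  have hu0' : (0:ℝ) ≤ u := by linarith
  have hf0 : (0:ℝ) ≤ (u * (1 - u)) ^ (s - 1) * (A + B * u) ^ (-s) :=
    mul_nonneg (Real.rpow_nonneg (mul_nonneg hu0' h1u) _) (Real.rpow_nonneg (by positivity) _)
  rw [Real.norm_of_nonneg hf0, Real.norm_of_nonneg (by positivity),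
    f_eq hu0' hu1]
  have hb1 : u ^ (s-1) ≤ max 1 ((2:ℝ)⁻¹ ^ (s-1)) :=
    rpow_bnd_hi (by norm_num) (by linarith) hu1
  have hb2 : (A + B * u) ^ (-s) ≤ A ^ (-s) :=
    Real.rpow_le_rpow_of_nonpos hA (by nlinarith) (by linarith)
  calc u ^ (s-1) * ((1 - u) ^ (s-1) * (A + B * u) ^ (-s))
      ≤ max 1 ((2:ℝ)⁻¹ ^ (s-1)) * ((1 - u) ^ (s-1) * A ^ (-s)) := by
        refine mul_le_mul hb1 ?_ (mul_nonneg (Real.rpow_nonneg h1u _)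
          (Real.rpow_nonneg (by positivity) _)) (le_max_of_le_left zero_le_one)
        exact mul_le_mul_of_nonneg_left hb2 (Real.rpow_nonneg h1u _)
    _ = max 1 ((2:ℝ)⁻¹ ^ (s-1)) * A ^ (-s) * (1 - u) ^ (s-1) := by ring

private lemma rpow_half_int (s : ℝ) (hs : 0 < s) :
    ∫ u in (0:ℝ)..(1/2), u ^ (s-1) = (2:ℝ)⁻¹ ^ s / s := by
  rw [integral_rpow (Or.inl (by linarith))]
  rw [show s - 1 + 1 = s by ring, Real.zero_rpow hs.ne']
  norm_num

private lemma int_1mu_eq (s : ℝ) (hs : 0 < s) :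
    ∫ u in (1/2:ℝ)..1, (1 - u) ^ (s-1) = (2:ℝ)⁻¹ ^ s / s := by
  have h := integral_comp_sub_left (a := (1/2:ℝ)) (b := 1) (fun x => x ^ (s-1)) 1
  norm_num at h
  rw [h, rpow_half_int s hs]

private lemma lower1 {s A B : ℝ} (hs : 0 < s) (hA : 0 < A) (hB : 0 < B)
    (hf : IntervalIntegrable (fun u : ℝ => (u * (1 - u)) ^ (s - 1) * (A + B * u) ^ (-s))
      volume (1/2) (3/4)) :
    min 1 ((2:ℝ)⁻¹ ^ (s-1)) * min 1 ((4:ℝ)⁻¹ ^ (s-1)) * (A+B) ^ (-s) * (1/4)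
      ≤ ∫ u in (1/2:ℝ)..(3/4), (u * (1 - u)) ^ (s - 1) * (A + B * u) ^ (-s) := by
  have hABpos : (0:ℝ) < A + B := by linarith
  have key : ∀ u ∈ Icc (1/2:ℝ) (3/4),
      min 1 ((2:ℝ)⁻¹ ^ (s-1)) * min 1 ((4:ℝ)⁻¹ ^ (s-1)) * (A+B) ^ (-s)
        ≤ (u * (1 - u)) ^ (s - 1) * (A + B * u) ^ (-s) := by
    intro u hu
    obtain ⟨hu0, hu1⟩ := hu
    rw [f_eq (by linarith) (by linarith)]
    have h1 : min 1 ((2:ℝ)⁻¹ ^ (s-1)) ≤ u ^ (s-1) :=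
      rpow_bnd_lo (by norm_num) (by norm_num; linarith) (by linarith)
    have h2 : min 1 ((4:ℝ)⁻¹ ^ (s-1)) ≤ (1-u) ^ (s-1) :=
      rpow_bnd_lo (by norm_num) (by norm_num; linarith) (by linarith)
    have h3 : (A+B) ^ (-s) ≤ (A + B*u) ^ (-s) :=
      Real.rpow_le_rpow_of_nonpos (by nlinarith) (by nlinarith) (by linarith)
    have := mul_le_mul h2 h3 (Real.rpow_nonneg hABpos.le _)
      (Real.rpow_nonneg (by linarith) _)
    rw [mul_assoc]
    exact mul_le_mul h1 this
      (mul_nonneg (le_min zero_le_one (Real.rpow_nonneg (by norm_num) _))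
        (Real.rpow_nonneg hABpos.le _))
      (Real.rpow_nonneg (by linarith) _)
  calc min 1 ((2:ℝ)⁻¹ ^ (s-1)) * min 1 ((4:ℝ)⁻¹ ^ (s-1)) * (A+B) ^ (-s) * (1/4)
      = ∫ _ in (1/2:ℝ)..(3/4),
          (min 1 ((2:ℝ)⁻¹ ^ (s-1)) * min 1 ((4:ℝ)⁻¹ ^ (s-1)) * (A+B) ^ (-s)) := by
        rw [intervalIntegral.integral_const, smul_eq_mul]; ring
    _ ≤ _ := integral_mono_on (by norm_num) intervalIntegrable_const hf key

private lemma lower2 {s A B : ℝ} (hs : 0 < s) (hA : 0 < A) (hB : 0 < B) (h2 : 2*A < B)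
    (hfL : IntervalIntegrable (fun u : ℝ => (u * (1 - u)) ^ (s - 1) * (A + B * u) ^ (-s))
      volume 0 (1/2)) :
    min 1 ((2:ℝ)⁻¹ ^ (s-1)) * ((2:ℝ) ^ (-s) * (A+B) ^ (-s)) * Real.log (B/(2*A))
      ≤ ∫ u in (0:ℝ)..(1/2), (u * (1 - u)) ^ (s - 1) * (A + B * u) ^ (-s) := by
  set e0 : ℝ := min 1 ((2:ℝ)⁻¹ ^ (s-1)) with he0
  have he0pos : 0 < e0 := lt_min one_pos (Real.rpow_pos_of_pos (by norm_num) _)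
  have hABu : A/B < 1/2 := (div_lt_iff₀ hB).mpr (by linarith)
  have hABpos : 0 < A/B := div_pos hA hB
  have hsub : uIcc (A/B) (1/2:ℝ) ⊆ uIcc (0:ℝ) (1/2) := by
    rw [uIcc_of_le hABu.le, uIcc_of_le (by norm_num)]
    exact Icc_subset_Icc hABpos.le le_rfl
  have hsub0 : uIcc (0:ℝ) (A/B) ⊆ uIcc (0:ℝ) (1/2) := by
    rw [uIcc_of_le hABpos.le, uIcc_of_le (by norm_num)]
    exact Icc_subset_Icc le_rfl hABu.le
  have hf1 := hfL.mono_set hsub0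
  have hf2 := hfL.mono_set hsub
  have hsplit := integral_add_adjacent_intervals hf1 hf2
  have hpos1 : (0:ℝ) ≤ ∫ u in (0:ℝ)..(A/B), (u * (1 - u)) ^ (s - 1) * (A + B * u) ^ (-s) := by
    refine integral_nonneg hABpos.le fun u hu => ?_
    exact f_nonneg hu.1 (by rcases hu with ⟨h1, h2'⟩; nlinarith) (by nlinarith [hu.1])
  have hg : IntervalIntegrable (fun u : ℝ => e0 * (2*B) ^ (-s) * u⁻¹) volume (A/B) (1/2) := by
    refine IntervalIntegrable.const_mul ?_ _
    refine intervalIntegrable_inv (fun x hx => ?_) continuousOn_id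
    rw [uIcc_of_le hABu.le] at hx
    exact ne_of_gt (lt_of_lt_of_le hABpos hx.1)
  have key : ∀ u ∈ Icc (A/B) (1/2:ℝ),
      e0 * (2*B) ^ (-s) * u⁻¹ ≤ (u * (1 - u)) ^ (s - 1) * (A + B * u) ^ (-s) := by
    intro u hu
    obtain ⟨hu0, hu1⟩ := hu
    have hupos : 0 < u := lt_of_lt_of_le hABpos hu0
    have hAu : A ≤ B * u := by
      rw [div_le_iff₀ hB] at hu0; linarith [hu0]
    rw [f_eq hupos.le (by linarith)]
    have h1 : e0 ≤ (1-u) ^ (s-1) := rpow_bnd_lo (by norm_num) (by norm_num; linarith) (by linarith)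
    have h3 : (2*B*u) ^ (-s) ≤ (A + B*u) ^ (-s) :=
      Real.rpow_le_rpow_of_nonpos (by nlinarith) (by nlinarith) (by linarith)
    have hmul : (2*B*u) ^ (-s) = (2*B) ^ (-s) * u ^ (-s) :=
      Real.mul_rpow (by positivity) hupos.le
    have huu : u ^ (s-1) * u ^ (-s) = u⁻¹ := by
      rw [← Real.rpow_add hupos, show s - 1 + -s = -1 by ring, Real.rpow_neg_one]
    calc e0 * (2*B) ^ (-s) * u⁻¹ = u ^ (s-1) * (e0 * (2*B*u) ^ (-s)) := by
          rw [hmul]; rw [← huu]; ring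
      _ ≤ u ^ (s-1) * ((1-u) ^ (s-1) * (A + B*u) ^ (-s)) := by
          refine mul_le_mul_of_nonneg_left ?_ (Real.rpow_nonneg hupos.le _)
          exact mul_le_mul h1 h3 (Real.rpow_nonneg (by positivity) _)
            (Real.rpow_nonneg (by linarith) _)
  have hmono := integral_mono_on hABu.le hg hf2 key
  have hint : ∫ u in (A/B)..(1/2:ℝ), e0 * (2*B) ^ (-s) * u⁻¹
      = e0 * (2*B) ^ (-s) * Real.log (B/(2*A)) := by
    rw [intervalIntegral.integral_const_mul, integral_inv_of_pos hABpos (by norm_num)]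
    congr 1
    rw [show (1/2:ℝ) / (A/B) = B/(2*A) by field_simp]
  have hlog : 0 ≤ Real.log (B/(2*A)) := by
    apply Real.log_nonneg
    rw [le_div_iff₀ (by positivity)]; linarith
  have hBs : (2:ℝ) ^ (-s) * (A+B) ^ (-s) ≤ (2*B) ^ (-s) := by
    have h1 : (2*(A+B)) ^ (-s) ≤ (2*B) ^ (-s) :=
      Real.rpow_le_rpow_of_nonpos (by linarith) (by linarith) (by linarith)
    rwa [Real.mul_rpow (by norm_num) (by linarith)] at h1
  have hfinal : e0 * ((2:ℝ) ^ (-s) * (A+B) ^ (-s)) * Real.log (B/(2*A))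
      ≤ e0 * (2*B) ^ (-s) * Real.log (B/(2*A)) := by
    apply mul_le_mul_of_nonneg_right _ hlog
    exact mul_le_mul_of_nonneg_left hBs he0pos.le
  calc e0 * ((2:ℝ) ^ (-s) * (A+B) ^ (-s)) * Real.log (B/(2*A))
      ≤ e0 * (2*B) ^ (-s) * Real.log (B/(2*A)) := hfinal
    _ = ∫ u in (A/B)..(1/2:ℝ), e0 * (2*B) ^ (-s) * u⁻¹ := hint.symm
    _ ≤ ∫ u in (A/B)..(1/2:ℝ), (u * (1 - u)) ^ (s - 1) * (A + B * u) ^ (-s) := hmono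
    _ ≤ _ := by linarith [hsplit, hpos1]

private lemma upper_right {s A B : ℝ} (hs : 0 < s) (hA : 0 < A) (hB : 0 < B)
    (hfR : IntervalIntegrable (fun u : ℝ => (u * (1 - u)) ^ (s - 1) * (A + B * u) ^ (-s))
      volume (1/2) 1) :
    ∫ u in (1/2:ℝ)..1, (u * (1 - u)) ^ (s - 1) * (A + B * u) ^ (-s)
      ≤ max 1 ((2:ℝ)⁻¹ ^ (s-1)) * ((2:ℝ) ^ s * (A+B) ^ (-s)) * ((2:ℝ)⁻¹ ^ s / s) := by
  set e1 : ℝ := max 1 ((2:ℝ)⁻¹ ^ (s-1)) with he1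
  have he1pos : (0:ℝ) < e1 := lt_max_of_lt_left one_pos
  have hABpos : (0:ℝ) < A + B := by linarith
  have hC : ((A+B) * 2⁻¹) ^ (-s) = 2 ^ s * (A+B) ^ (-s) := by
    rw [Real.mul_rpow hABpos.le (by norm_num), inv_rpow_neg (by norm_num : (0:ℝ) ≤ 2) s]; ring
  have key : ∀ u ∈ Icc (1/2:ℝ) 1,
      (u * (1 - u)) ^ (s - 1) * (A + B * u) ^ (-s)
        ≤ e1 * ((2:ℝ) ^ s * (A+B) ^ (-s)) * (1-u) ^ (s-1) := by
    intro u hu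
    obtain ⟨hu0, hu1⟩ := hu
    rw [f_eq (by linarith) hu1]
    have h1 : u ^ (s-1) ≤ e1 := rpow_bnd_hi (by norm_num) (by norm_num; linarith) hu1
    have h3 : (A + B*u) ^ (-s) ≤ 2 ^ s * (A+B) ^ (-s) := by
      rw [← hC]
      exact Real.rpow_le_rpow_of_nonpos (by nlinarith) (by nlinarith) (by linarith)
    calc u ^ (s-1) * ((1-u) ^ (s-1) * (A + B*u) ^ (-s))
        ≤ e1 * ((1-u) ^ (s-1) * (2 ^ s * (A+B) ^ (-s))) := by
          refine mul_le_mul h1 ?_ (mul_nonneg (Real.rpow_nonneg (by linarith) _)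
            (Real.rpow_nonneg (by positivity) _)) he1pos.le
          exact mul_le_mul_of_nonneg_left h3 (Real.rpow_nonneg (by linarith) _)
      _ = e1 * ((2:ℝ) ^ s * (A+B) ^ (-s)) * (1-u) ^ (s-1) := by ring
  have hg : IntervalIntegrable
      (fun u : ℝ => e1 * ((2:ℝ) ^ s * (A+B) ^ (-s)) * (1-u) ^ (s-1)) volume (1/2) 1 :=
    (int_1mu s hs).const_mul _
  calc ∫ u in (1/2:ℝ)..1, (u * (1 - u)) ^ (s - 1) * (A + B * u) ^ (-s)
      ≤ ∫ u in (1/2:ℝ)..1, e1 * ((2:ℝ) ^ s * (A+B) ^ (-s)) * (1-u) ^ (s-1) :=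
        integral_mono_on (by norm_num) hfR hg key
    _ = e1 * ((2:ℝ) ^ s * (A+B) ^ (-s)) * ((2:ℝ)⁻¹ ^ s / s) := by
        rw [intervalIntegral.integral_const_mul, int_1mu_eq s hs]

private lemma upper_leftA {s A B : ℝ} (hs : 0 < s) (hA : 0 < A) (hB : 0 < B) (hBA : B ≤ 2*A)
    (hfL : IntervalIntegrable (fun u : ℝ => (u * (1 - u)) ^ (s - 1) * (A + B * u) ^ (-s))
      volume 0 (1/2)) :
    ∫ u in (0:ℝ)..(1/2), (u * (1 - u)) ^ (s - 1) * (A + B * u) ^ (-s)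
      ≤ max 1 ((2:ℝ)⁻¹ ^ (s-1)) * ((3:ℝ) ^ s * (A+B) ^ (-s)) * ((2:ℝ)⁻¹ ^ s / s) := by
  set e1 : ℝ := max 1 ((2:ℝ)⁻¹ ^ (s-1)) with he1
  have he1pos : (0:ℝ) < e1 := lt_max_of_lt_left one_pos
  have hABpos : (0:ℝ) < A + B := by linarith
  have hC : ((A+B) * 3⁻¹) ^ (-s) = 3 ^ s * (A+B) ^ (-s) := by
    rw [Real.mul_rpow hABpos.le (by norm_num), inv_rpow_neg (by norm_num : (0:ℝ) ≤ 3) s]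
    ring
  have key : ∀ u ∈ Icc (0:ℝ) (1/2),
      (u * (1 - u)) ^ (s - 1) * (A + B * u) ^ (-s)
        ≤ u ^ (s-1) * (e1 * ((3:ℝ) ^ s * (A+B) ^ (-s))) := by
    intro u hu
    obtain ⟨hu0, hu1⟩ := hu
    rw [f_eq hu0 (by linarith)]
    refine mul_le_mul_of_nonneg_left ?_ (Real.rpow_nonneg hu0 _)
    have h1 : (1-u) ^ (s-1) ≤ e1 := rpow_bnd_hi (by norm_num) (by norm_num; linarith) (by linarith)
    have h3 : (A + B*u) ^ (-s) ≤ 3 ^ s * (A+B) ^ (-s) := by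
      rw [← hC]
      exact Real.rpow_le_rpow_of_nonpos (by nlinarith) (by nlinarith) (by linarith)
    exact mul_le_mul h1 h3 (Real.rpow_nonneg (by positivity) _) he1pos.le
  have hg : IntervalIntegrable
      (fun u : ℝ => u ^ (s-1) * (e1 * ((3:ℝ) ^ s * (A+B) ^ (-s)))) volume 0 (1/2) :=
    (intervalIntegrable_rpow' (by linarith)).mul_const _
  calc ∫ u in (0:ℝ)..(1/2), (u * (1 - u)) ^ (s - 1) * (A + B * u) ^ (-s)
      ≤ ∫ u in (0:ℝ)..(1/2), u ^ (s-1) * (e1 * ((3:ℝ) ^ s * (A+B) ^ (-s))) :=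
        integral_mono_on (by norm_num) hfL hg key
    _ = e1 * ((3:ℝ) ^ s * (A+B) ^ (-s)) * ((2:ℝ)⁻¹ ^ s / s) := by
        rw [intervalIntegral.integral_mul_const, rpow_half_int s hs]; ring

private lemma upper_leftB {s A B : ℝ} (hs : 0 < s) (hA : 0 < A) (hB : 0 < B) (h2 : 2*A < B)
    (hfL : IntervalIntegrable (fun u : ℝ => (u * (1 - u)) ^ (s - 1) * (A + B * u) ^ (-s))
      volume 0 (1/2)) :
    ∫ u in (0:ℝ)..(1/2), (u * (1 - u)) ^ (s - 1) * (A + B * u) ^ (-s)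
      ≤ max 1 ((2:ℝ)⁻¹ ^ (s-1)) * B ^ (-s) * (1/s) +
        max 1 ((2:ℝ)⁻¹ ^ (s-1)) * B ^ (-s) * Real.log (B/(2*A)) := by
  set e1 : ℝ := max 1 ((2:ℝ)⁻¹ ^ (s-1)) with he1
  have he1pos : (0:ℝ) < e1 := lt_max_of_lt_left one_pos
  have hABu : A/B < 1/2 := (div_lt_iff₀ hB).mpr (by linarith)
  have hABpos : 0 < A/B := div_pos hA hB
  have hsub : uIcc (A/B) (1/2:ℝ) ⊆ uIcc (0:ℝ) (1/2) := by
    rw [uIcc_of_le hABu.le, uIcc_of_le (by norm_num)]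
    exact Icc_subset_Icc hABpos.le le_rfl
  have hsub0 : uIcc (0:ℝ) (A/B) ⊆ uIcc (0:ℝ) (1/2) := by
    rw [uIcc_of_le hABpos.le, uIcc_of_le (by norm_num)]
    exact Icc_subset_Icc le_rfl hABu.le
  have hf1 := hfL.mono_set hsub0
  have hf2 := hfL.mono_set hsub
  have hsplit := integral_add_adjacent_intervals hf1 hf2
  have keya : ∀ u ∈ Icc (0:ℝ) (A/B),
      (u * (1 - u)) ^ (s - 1) * (A + B * u) ^ (-s) ≤ u ^ (s-1) * (e1 * A ^ (-s)) := by
    intro u hu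
    obtain ⟨hu0, hu1⟩ := hu
    have hu1' : u ≤ 1/2 := le_trans hu1 hABu.le
    rw [f_eq hu0 (by linarith)]
    refine mul_le_mul_of_nonneg_left ?_ (Real.rpow_nonneg hu0 _)
    have h1 : (1-u) ^ (s-1) ≤ e1 :=
      rpow_bnd_hi (by norm_num) (by norm_num; linarith) (by linarith)
    have h3 : (A + B*u) ^ (-s) ≤ A ^ (-s) :=
      Real.rpow_le_rpow_of_nonpos hA (by nlinarith) (by linarith)
    exact mul_le_mul h1 h3 (Real.rpow_nonneg (by positivity) _) he1pos.le
  have hga : IntervalIntegrable (fun u : ℝ => u ^ (s-1) * (e1 * A ^ (-s))) volume 0 (A/B) :=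
    (intervalIntegrable_rpow' (by linarith)).mul_const _
  have hinta : ∫ u in (0:ℝ)..(A/B), u ^ (s-1) * (e1 * A ^ (-s)) = e1 * B ^ (-s) * (1/s) := by
    rw [intervalIntegral.integral_mul_const, integral_rpow (Or.inl (by linarith)),
      show s - 1 + 1 = s by ring, Real.zero_rpow hs.ne', Real.div_rpow hA.le hB.le,
      Real.rpow_neg hA.le, Real.rpow_neg hB.le]
    field_simp
    ring
  have ha : ∫ u in (0:ℝ)..(A/B), (u * (1 - u)) ^ (s - 1) * (A + B * u) ^ (-s)
      ≤ e1 * B ^ (-s) * (1/s) := by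
    rw [← hinta]
    exact integral_mono_on hABpos.le hf1 hga keya
  have keyb : ∀ u ∈ Icc (A/B) (1/2:ℝ),
      (u * (1 - u)) ^ (s - 1) * (A + B * u) ^ (-s) ≤ e1 * B ^ (-s) * u⁻¹ := by
    intro u hu
    obtain ⟨hu0, hu1⟩ := hu
    have hupos : 0 < u := lt_of_lt_of_le hABpos hu0
    rw [f_eq hupos.le (by linarith)]
    have h1 : (1-u) ^ (s-1) ≤ e1 :=
      rpow_bnd_hi (by norm_num) (by norm_num; linarith) (by linarith)
    have h3 : (A + B*u) ^ (-s) ≤ (B*u) ^ (-s) :=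
      Real.rpow_le_rpow_of_nonpos (by positivity) (by linarith) (by linarith)
    have hmul : (B*u) ^ (-s) = B ^ (-s) * u ^ (-s) := Real.mul_rpow hB.le hupos.le
    have huu : u ^ (s-1) * u ^ (-s) = u⁻¹ := by
      rw [← Real.rpow_add hupos, show s - 1 + -s = -1 by ring, Real.rpow_neg_one]
    calc u ^ (s-1) * ((1-u) ^ (s-1) * (A + B*u) ^ (-s))
        ≤ u ^ (s-1) * (e1 * (B ^ (-s) * u ^ (-s))) := by
          refine mul_le_mul_of_nonneg_left ?_ (Real.rpow_nonneg hupos.le _)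
          rw [← hmul]
          exact mul_le_mul h1 h3 (Real.rpow_nonneg (by positivity) _) he1pos.le
      _ = e1 * B ^ (-s) * (u ^ (s-1) * u ^ (-s)) := by ring
      _ = e1 * B ^ (-s) * u⁻¹ := by rw [huu]
  have hgb : IntervalIntegrable (fun u : ℝ => e1 * B ^ (-s) * u⁻¹) volume (A/B) (1/2) := by
    refine IntervalIntegrable.const_mul ?_ _
    refine intervalIntegrable_inv (fun x hx => ?_) continuousOn_id
    rw [uIcc_of_le hABu.le] at hx
    exact ne_of_gt (lt_of_lt_of_le hABpos hx.1)
  have hintb : ∫ u in (A/B)..(1/2:ℝ), e1 * B ^ (-s) * u⁻¹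
      = e1 * B ^ (-s) * Real.log (B/(2*A)) := by
    rw [intervalIntegral.integral_const_mul, integral_inv_of_pos hABpos (by norm_num)]
    congr 1
    rw [show (1/2:ℝ) / (A/B) = B/(2*A) by field_simp]
  have hb : ∫ u in (A/B)..(1/2:ℝ), (u * (1 - u)) ^ (s - 1) * (A + B * u) ^ (-s)
      ≤ e1 * B ^ (-s) * Real.log (B/(2*A)) := by
    rw [← hintb]
    exact integral_mono_on hABu.le hf2 hgb keyb
  linarith [hsplit, ha, hb]

set_option maxHeartbeats 2000000 in
/-- For `m > 0`, there are constants `0 < c₁ ≤ c₂` depending only on `m`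
such that for all `A, B > 0`,
`∫_0^1 (u(1-u))^{m/2-1} (A + Bu)^{-m/2} du ≍ ln(2(A+B)/A) / (A+B)^{m/2}`. -/
theorem stmt_15 (m : ℝ) (hm : 0 < m) :
    ∃ c₁ c₂ : ℝ, 0 < c₁ ∧ c₁ ≤ c₂ ∧
      ∀ A B : ℝ, 0 < A → 0 < B →
        c₁ ≤ (∫ u in Set.Ioo (0 : ℝ) 1,
                (u * (1 - u)) ^ (m / 2 - 1) * (A + B * u) ^ (-(m / 2)))
              * (A + B) ^ (m / 2) / Real.log (2 * (A + B) / A) ∧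
        (∫ u in Set.Ioo (0 : ℝ) 1,
                (u * (1 - u)) ^ (m / 2 - 1) * (A + B * u) ^ (-(m / 2)))
              * (A + B) ^ (m / 2) / Real.log (2 * (A + B) / A) ≤ c₂ := by
  have hs : 0 < m / 2 := by linarith
  set s : ℝ := m / 2 with hsdef
  clear_value s
  have hlog2 : 0 < Real.log 2 := Real.log_pos one_lt_two
  have hlog6 : 0 < Real.log 6 := Real.log_pos (by norm_num)
  set e0 : ℝ := min 1 ((2:ℝ)⁻¹ ^ (s-1)) with he0def
  clear_value e0
  set d0 : ℝ := min 1 ((4:ℝ)⁻¹ ^ (s-1)) with hd0def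
  clear_value d0
  set e1 : ℝ := max 1 ((2:ℝ)⁻¹ ^ (s-1)) with he1def
  clear_value e1
  have he0pos : 0 < e0 := he0def ▸ lt_min one_pos (Real.rpow_pos_of_pos (by norm_num) _)
  have hd0pos : 0 < d0 := hd0def ▸ lt_min one_pos (Real.rpow_pos_of_pos (by norm_num) _)
  have he1pos : (0:ℝ) < e1 := he1def ▸ lt_max_of_lt_left one_pos
  set k1 : ℝ := e0 * d0 * (1/4) with hk1def
  clear_value k1
  have hk1pos : 0 < k1 := by rw [hk1def]; positivity
  set c₁ : ℝ := min (k1 / Real.log 6) (e0 * (2:ℝ) ^ (-s)) with hc1def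
  clear_value c₁
  have hc1pos : 0 < c₁ := by
    rw [hc1def]
    exact lt_min (div_pos hk1pos hlog6) (mul_pos he0pos (Real.rpow_pos_of_pos (by norm_num) _))
  set rU : ℝ := e1 * (2:ℝ) ^ s * ((2:ℝ)⁻¹ ^ s / s) with hrUdef
  clear_value rU
  set lA : ℝ := e1 * (3:ℝ) ^ s * ((2:ℝ)⁻¹ ^ s / s) with hlAdef
  clear_value lA
  have hrUpos : 0 < rU := by
    rw [hrUdef]
    exact mul_pos (mul_pos he1pos (Real.rpow_pos_of_pos (by norm_num) _))
      (div_pos (Real.rpow_pos_of_pos (by norm_num) _) hs)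
  have hlApos : 0 < lA := by
    rw [hlAdef]
    exact mul_pos (mul_pos he1pos (Real.rpow_pos_of_pos (by norm_num) _))
      (div_pos (Real.rpow_pos_of_pos (by norm_num) _) hs)
  set σ : ℝ := 1 / (s * Real.log 2) with hσdef
  clear_value σ
  have hσpos : 0 < σ := hσdef ▸ div_pos one_pos (mul_pos hs hlog2)
  set cA : ℝ := (lA + rU) / Real.log 2 with hcAdef
  clear_value cA
  set cB : ℝ := e1 * (2:ℝ) ^ s * σ + e1 * (2:ℝ) ^ s + rU / Real.log 2 with hcBdef
  clear_value cB
  have hcApos : 0 < cA := hcAdef ▸ div_pos (by linarith) hlog2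
  have hcBpos : 0 < cB := by
    have h1 : 0 < e1 * (2:ℝ) ^ s := mul_pos he1pos (Real.rpow_pos_of_pos (by norm_num) _)
    have h2 : 0 < rU / Real.log 2 := div_pos hrUpos hlog2
    rw [hcBdef]
    nlinarith [mul_pos h1 hσpos]
  set c₂ : ℝ := max c₁ (max cA cB) with hc2def
  clear_value c₂
  refine ⟨c₁, c₂, hc1pos, hc2def ▸ le_max_left _ _, ?_⟩
  intro A B hA hB
  have hABpos : (0:ℝ) < A + B := by linarith
  have hArg : (0:ℝ) < 2 * (A + B) / A := by positivity
  have hL2 : Real.log 2 ≤ Real.log (2 * (A + B) / A) := by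
    apply Real.log_le_log (by norm_num)
    rw [le_div_iff₀ hA]; nlinarith
  set L : ℝ := Real.log (2 * (A + B) / A) with hLdef
  clear_value L
  have hLpos : 0 < L := lt_of_lt_of_le hlog2 (hLdef ▸ hL2)
  set P : ℝ := (A + B) ^ (-s) with hPdef
  clear_value P
  have hPpos : 0 < P := hPdef ▸ Real.rpow_pos_of_pos hABpos _
  have hcancel : P * (A + B) ^ s = 1 := by
    rw [hPdef, ← Real.rpow_add hABpos]
    norm_num
  -- integrability
  have hfL := int_left hs hA hB
  have hfR := int_right hs hA hB
  have hsub34 : uIcc (1/2:ℝ) (3/4) ⊆ uIcc (1/2:ℝ) 1 := by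
    rw [uIcc_of_le (by norm_num), uIcc_of_le (by norm_num)]
    exact Icc_subset_Icc le_rfl (by norm_num)
  have hsub34' : uIcc (3/4:ℝ) 1 ⊆ uIcc (1/2:ℝ) 1 := by
    rw [uIcc_of_le (by norm_num), uIcc_of_le (by norm_num)]
    exact Icc_subset_Icc (by norm_num) le_rfl
  have hfM := hfR.mono_set hsub34
  have hfM' := hfR.mono_set hsub34'
  have hRsplit := integral_add_adjacent_intervals hfM hfM'
  have hpos34 : (0:ℝ) ≤ ∫ u in (3/4:ℝ)..1, (u * (1 - u)) ^ (s - 1) * (A + B * u) ^ (-s) := by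
    refine integral_nonneg (by norm_num) fun u hu => ?_
    exact f_nonneg (by linarith [hu.1]) hu.2 (by nlinarith [hu.1])
  have hposL : (0:ℝ) ≤ ∫ u in (0:ℝ)..(1/2), (u * (1 - u)) ^ (s - 1) * (A + B * u) ^ (-s) := by
    refine integral_nonneg (by norm_num) fun u hu => ?_
    exact f_nonneg hu.1 (by linarith [hu.2]) (by nlinarith [hu.1])
  have hIeq : (∫ u in Set.Ioo (0:ℝ) 1, (u * (1 - u)) ^ (s - 1) * (A + B * u) ^ (-s))
      = (∫ u in (0:ℝ)..(1/2), (u * (1 - u)) ^ (s - 1) * (A + B * u) ^ (-s))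
        + ∫ u in (1/2:ℝ)..1, (u * (1 - u)) ^ (s - 1) * (A + B * u) ^ (-s) := by
    rw [← MeasureTheory.integral_Ioc_eq_integral_Ioo, ← intervalIntegral.integral_of_le zero_le_one]
    exact (integral_add_adjacent_intervals hfL hfR).symm
  have hlow1 : e0 * d0 * P * (1/4)
      ≤ ∫ u in (1/2:ℝ)..(3/4), (u * (1 - u)) ^ (s - 1) * (A + B * u) ^ (-s) := by
    rw [he0def, hd0def, hPdef]
    exact lower1 hs hA hB hfM
  have hup2 : (∫ u in (1/2:ℝ)..1, (u * (1 - u)) ^ (s - 1) * (A + B * u) ^ (-s))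
      ≤ e1 * ((2:ℝ) ^ s * P) * ((2:ℝ)⁻¹ ^ s / s) := by
    rw [he1def, hPdef]
    exact upper_right hs hA hB hfR
  constructor
  · -- lower bound
    rw [hIeq, le_div_iff₀ hLpos]
    have hsuff : c₁ * L * P ≤ (∫ u in (0:ℝ)..(1/2), (u * (1 - u)) ^ (s-1) * (A + B*u) ^ (-s))
        + ∫ u in (1/2:ℝ)..1, (u * (1 - u)) ^ (s-1) * (A + B*u) ^ (-s) := by
      rcases le_or_gt B (2*A) with hBA | hBA
      · have hL6 : L ≤ Real.log 6 := by
          rw [hLdef]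
          apply Real.log_le_log hArg
          rw [div_le_iff₀ hA]; nlinarith
        have hc1L : c₁ * L ≤ k1 := by
          calc c₁ * L ≤ (k1 / Real.log 6) * Real.log 6 := by
                have : c₁ ≤ k1 / Real.log 6 := hc1def ▸ min_le_left _ _
                exact mul_le_mul this hL6 hLpos.le (div_pos hk1pos hlog6).le
            _ = k1 := div_mul_cancel₀ _ hlog6.ne'
        calc c₁ * L * P ≤ k1 * P := mul_le_mul_of_nonneg_right hc1L hPpos.le
          _ = e0 * d0 * P * (1/4) := by rw [hk1def]; ring
          _ ≤ ∫ u in (1/2:ℝ)..(3/4), (u * (1 - u)) ^ (s-1) * (A + B*u) ^ (-s) := hlow1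
          _ ≤ _ := by linarith [hRsplit, hpos34, hposL]
      · have hlow2 : e0 * ((2:ℝ) ^ (-s) * P) * Real.log (B/(2*A))
            ≤ ∫ u in (0:ℝ)..(1/2), (u * (1 - u)) ^ (s - 1) * (A + B * u) ^ (-s) := by
          rw [he0def, hPdef]
          exact lower2 hs hA hB hBA hfL
        have hBpA : (0:ℝ) < B / (2*A) := by positivity
        have hlogB : 0 ≤ Real.log (B/(2*A)) := by
          apply Real.log_nonneg
          rw [le_div_iff₀ (by positivity)]; linarith
        have hL36 : L ≤ Real.log 6 + Real.log (B/(2*A)) := by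
          have h0 : (6:ℝ) * (B/(2*A)) = 3*B/A := by field_simp; ring
          have h1 : L ≤ Real.log (6 * (B/(2*A))) := by
            rw [hLdef]
            apply Real.log_le_log hArg
            rw [h0, div_le_div_iff_of_pos_right hA]; linarith
          rwa [Real.log_mul (by norm_num) hBpA.ne'] at h1
        have hc16 : c₁ * Real.log 6 ≤ k1 := by
          have hmin : c₁ ≤ k1 / Real.log 6 := hc1def ▸ min_le_left _ _
          calc c₁ * Real.log 6 ≤ (k1 / Real.log 6) * Real.log 6 :=
                mul_le_mul_of_nonneg_right hmin hlog6.le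
            _ = k1 := div_mul_cancel₀ _ hlog6.ne'
        have hc1B : c₁ * Real.log (B/(2*A)) ≤ e0 * (2:ℝ) ^ (-s) * Real.log (B/(2*A)) :=
          mul_le_mul_of_nonneg_right (hc1def ▸ min_le_right (k1 / Real.log 6) (e0 * (2:ℝ) ^ (-s))) hlogB
        have hc1L : c₁ * L ≤ k1 + e0 * (2:ℝ) ^ (-s) * Real.log (B/(2*A)) := by
          have hm1 := mul_le_mul_of_nonneg_left hL36 hc1pos.le
          have hm2 : c₁ * (Real.log 6 + Real.log (B/(2*A)))
              = c₁ * Real.log 6 + c₁ * Real.log (B/(2*A)) := by ring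
          linarith [hc16, hc1B]
        calc c₁ * L * P ≤ (k1 + e0 * (2:ℝ) ^ (-s) * Real.log (B/(2*A))) * P :=
              mul_le_mul_of_nonneg_right hc1L hPpos.le
          _ = e0 * d0 * P * (1/4) + e0 * ((2:ℝ) ^ (-s) * P) * Real.log (B/(2*A)) := by
              rw [hk1def]; ring
          _ ≤ (∫ u in (1/2:ℝ)..(3/4), (u * (1 - u)) ^ (s-1) * (A + B*u) ^ (-s))
              + ∫ u in (0:ℝ)..(1/2), (u * (1 - u)) ^ (s-1) * (A + B*u) ^ (-s) :=
              add_le_add hlow1 hlow2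
          _ ≤ _ := by linarith [hRsplit, hpos34]
    calc c₁ * L = c₁ * L * (P * (A+B) ^ s) := by rw [hcancel, mul_one]
      _ = (c₁ * L * P) * (A+B) ^ s := by ring
      _ ≤ _ := mul_le_mul_of_nonneg_right hsuff (Real.rpow_nonneg hABpos.le _)
  · -- upper bound
    rw [hIeq, div_le_iff₀ hLpos]
    have hsuff : (∫ u in (0:ℝ)..(1/2), (u * (1 - u)) ^ (s-1) * (A + B*u) ^ (-s))
        + (∫ u in (1/2:ℝ)..1, (u * (1 - u)) ^ (s-1) * (A + B*u) ^ (-s)) ≤ c₂ * L * P := by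
      rcases le_or_gt B (2*A) with hBA | hBA
      · have hup1 : (∫ u in (0:ℝ)..(1/2), (u * (1 - u)) ^ (s - 1) * (A + B * u) ^ (-s))
            ≤ e1 * ((3:ℝ) ^ s * P) * ((2:ℝ)⁻¹ ^ s / s) := by
          rw [he1def, hPdef]
          exact upper_leftA hs hA hB hBA hfL
        have hcALP : (lA + rU) * P ≤ c₂ * L * P := by
          refine mul_le_mul_of_nonneg_right ?_ hPpos.le
          calc lA + rU = cA * Real.log 2 := by
                rw [hcAdef, div_mul_cancel₀ _ hlog2.ne']
            _ ≤ c₂ * L := by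
                have hcAc2 : cA ≤ c₂ := hc2def ▸ le_trans (le_max_left _ _) (le_max_right _ _)
                have hc2pos : 0 ≤ c₂ := le_trans hcApos.le hcAc2
                exact mul_le_mul hcAc2 hL2 hlog2.le hc2pos
        calc (∫ u in (0:ℝ)..(1/2), (u * (1 - u)) ^ (s-1) * (A + B*u) ^ (-s))
            + (∫ u in (1/2:ℝ)..1, (u * (1 - u)) ^ (s-1) * (A + B*u) ^ (-s))
            ≤ e1 * ((3:ℝ) ^ s * P) * ((2:ℝ)⁻¹ ^ s / s)
              + e1 * ((2:ℝ) ^ s * P) * ((2:ℝ)⁻¹ ^ s / s) := add_le_add hup1 hup2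
          _ = (lA + rU) * P := by rw [hlAdef, hrUdef]; ring
          _ ≤ c₂ * L * P := hcALP
      · have hup1 : (∫ u in (0:ℝ)..(1/2), (u * (1 - u)) ^ (s - 1) * (A + B * u) ^ (-s))
            ≤ e1 * B ^ (-s) * (1/s) + e1 * B ^ (-s) * Real.log (B/(2*A)) := by
          rw [he1def]
          exact upper_leftB hs hA hB hBA hfL
        have hBpA : (0:ℝ) < B / (2*A) := by positivity
        have hlogB : 0 ≤ Real.log (B/(2*A)) := by
          apply Real.log_nonneg
          rw [le_div_iff₀ (by positivity)]; linarith
        have hB2 : B ^ (-s) ≤ 2 ^ s * P := by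
          have hC : ((A+B) * 2⁻¹) ^ (-s) = 2 ^ s * P := by
            rw [hPdef, Real.mul_rpow hABpos.le (by norm_num),
              inv_rpow_neg (by norm_num : (0:ℝ) ≤ 2) s]; ring
          rw [← hC]
          exact Real.rpow_le_rpow_of_nonpos (by linarith) (by linarith) (by linarith)
        have h1s : 1/s ≤ L * σ := by
          have h0 : 1/s = Real.log 2 * σ := by
            rw [hσdef]; field_simp
          rw [h0]
          exact mul_le_mul_of_nonneg_right hL2 hσpos.le
        have hlogL : Real.log (B/(2*A)) ≤ L := by
          rw [hLdef]
          apply Real.log_le_log hBpA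
          rw [div_le_div_iff₀ (by positivity) hA]; nlinarith
        have t1 : e1 * B ^ (-s) * (1/s) ≤ e1 * ((2:ℝ) ^ s * P) * (L * σ) := by
          calc e1 * B ^ (-s) * (1/s) = e1 * (B ^ (-s) * (1/s)) := by ring
            _ ≤ e1 * ((2 ^ s * P) * (L * σ)) := by
                refine mul_le_mul_of_nonneg_left ?_ he1pos.le
                refine mul_le_mul hB2 h1s (by positivity) (by positivity)
            _ = e1 * ((2:ℝ) ^ s * P) * (L * σ) := by ring
        have t2 : e1 * B ^ (-s) * Real.log (B/(2*A)) ≤ e1 * ((2:ℝ) ^ s * P) * L := by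
          calc e1 * B ^ (-s) * Real.log (B/(2*A))
              = e1 * (B ^ (-s) * Real.log (B/(2*A))) := by ring
            _ ≤ e1 * ((2 ^ s * P) * L) := by
                refine mul_le_mul_of_nonneg_left ?_ he1pos.le
                exact mul_le_mul hB2 hlogL hlogB (by positivity)
            _ = e1 * ((2:ℝ) ^ s * P) * L := by ring
        have t3 : e1 * ((2:ℝ) ^ s * P) * ((2:ℝ)⁻¹ ^ s / s) ≤ (rU / Real.log 2) * L * P := by
          have h0 : e1 * ((2:ℝ) ^ s * P) * ((2:ℝ)⁻¹ ^ s / s) = rU * P := by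
            rw [hrUdef]; ring
          rw [h0]
          calc rU * P = ((rU / Real.log 2) * Real.log 2) * P := by
                rw [div_mul_cancel₀ _ hlog2.ne']
            _ ≤ ((rU / Real.log 2) * L) * P := by
                refine mul_le_mul_of_nonneg_right ?_ hPpos.le
                exact mul_le_mul_of_nonneg_left hL2 (div_pos hrUpos hlog2).le
            _ = (rU / Real.log 2) * L * P := by ring
        have hsum : (∫ u in (0:ℝ)..(1/2), (u * (1 - u)) ^ (s-1) * (A + B*u) ^ (-s))
            + (∫ u in (1/2:ℝ)..1, (u * (1 - u)) ^ (s-1) * (A + B*u) ^ (-s))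
            ≤ cB * L * P := by
          have := add_le_add (add_le_add hup1 hup2) (le_refl (0:ℝ))
          have hcomb : e1 * ((2:ℝ) ^ s * P) * (L * σ) + e1 * ((2:ℝ) ^ s * P) * L
              + (rU / Real.log 2) * L * P = cB * L * P := by
            rw [hcBdef]; ring
          calc (∫ u in (0:ℝ)..(1/2), (u * (1 - u)) ^ (s-1) * (A + B*u) ^ (-s))
              + (∫ u in (1/2:ℝ)..1, (u * (1 - u)) ^ (s-1) * (A + B*u) ^ (-s))
              ≤ (e1 * B ^ (-s) * (1/s) + e1 * B ^ (-s) * Real.log (B/(2*A)))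
                + e1 * ((2:ℝ) ^ s * P) * ((2:ℝ)⁻¹ ^ s / s) := add_le_add hup1 hup2
            _ ≤ e1 * ((2:ℝ) ^ s * P) * (L * σ) + e1 * ((2:ℝ) ^ s * P) * L
                + (rU / Real.log 2) * L * P := by linarith [t1, t2, t3]
            _ = cB * L * P := hcomb
        have hcB2 : cB * L * P ≤ c₂ * L * P := by
          refine mul_le_mul_of_nonneg_right ?_ hPpos.le
          refine mul_le_mul_of_nonneg_right ?_ hLpos.le
          exact hc2def ▸ le_trans (le_max_right cA cB) (le_max_right _ _)
        exact le_trans hsum hcB2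
    calc ((∫ u in (0:ℝ)..(1/2), (u * (1 - u)) ^ (s-1) * (A + B*u) ^ (-s))
          + (∫ u in (1/2:ℝ)..1, (u * (1 - u)) ^ (s-1) * (A + B*u) ^ (-s))) * (A+B) ^ s
        ≤ (c₂ * L * P) * (A+B) ^ s :=
          mul_le_mul_of_nonneg_right hsuff (Real.rpow_nonneg hABpos.le _)
      _ = c₂ * L * (P * (A+B) ^ s) := by ring
      _ = c₂ * L := by rw [hcancel, mul_one]
end
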